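/- arXiv:1807.07231 — 8 statements merged into one kernel-verified Lean document; each statement's English description precedes it below -/
import Mathlib

section
/- Let N ≥ 1, let j : Fin N → ZMod 2 and let b : Fin N → Fin N. Then 2^{-N} · Σ_{i : Fin N → ZMod 2} ( ∏_{p} χ(i_p · j_p) ) · ( ∏_{t} χ(i_{b(t)} · j_t) ) = ∏_{p} [ j_p = Σ_{x ∈ b^{-1}(p)} j_x ], where the bracket [P] equals 1 if the condition P holds in ZMod 2 and 0 otherwise, and χ : ZMod 2 → ℂ is given by χ(0) = 1, χ(1) = −1. -/
/-- The sign character `χ : ZMod 2 → ℂ`, `χ(0) = 1`, `χ(1) = -1`. -/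
noncomputable def signChar : ZMod 2 → ℂ := fun a => if a = 0 then 1 else -1

lemma signChar_add (a c : ZMod 2) : signChar (a + c) = signChar a * signChar c := by
  rcases (by decide : ∀ a : ZMod 2, a = 0 ∨ a = 1) a with rfl | rfl <;>
    rcases (by decide : ∀ a : ZMod 2, a = 0 ∨ a = 1) c with rfl | rfl <;>
    simp [signChar, show (1 + 1 : ZMod 2) = 0 by decide]

lemma prod_signChar {α : Type*} (s : Finset α) (x : ZMod 2) (g : α → ZMod 2) :
    ∏ t ∈ s, signChar (x * g t) = signChar (x * ∑ t ∈ s, g t) := by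
  classical
  induction s using Finset.induction with
  | empty => simp [signChar]
  | insert _ _ h ih =>
    rw [Finset.prod_insert h, Finset.sum_insert h, mul_add, signChar_add, ih]

lemma sum_signChar (c : ZMod 2) :
    ∑ a : ZMod 2, signChar (a * c) = 2 * (if c = 0 then 1 else 0) := by
  have huniv : (Finset.univ : Finset (ZMod 2)) = {0, 1} := by decide
  rcases (by decide : ∀ a : ZMod 2, a = 0 ∨ a = 1) c with rfl | rfl <;> simp [huniv, signChar] <;> norm_num

/-- The Fourier-sum evaluation used in computing the magic character of the
twisted orthogonal group: for `j : Fin N → ZMod 2` and `b : Fin N → Fin N`,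
`2^{-N} Σ_i (∏_p χ(i_p j_p)) (∏_t χ(i_{b t} j_t)) = ∏_p [j_p = Σ_{x ∈ b⁻¹(p)} j_x]`. -/
theorem fourier_sum_eval (N : ℕ) (hN : 1 ≤ N) (j : Fin N → ZMod 2) (b : Fin N → Fin N) :
    ((2 : ℂ) ^ N)⁻¹ *
      ∑ i : Fin N → ZMod 2,
        (∏ p : Fin N, signChar (i p * j p)) * ∏ t : Fin N, signChar (i (b t) * j t) =
    ∏ p : Fin N,
      (if j p = ∑ x ∈ Finset.univ.filter (fun x => b x = p), j x then (1 : ℂ) else 0) := by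
  classical
  set c : Fin N → ZMod 2 :=
    fun p => j p + ∑ x ∈ Finset.univ.filter (fun x => b x = p), j x with hc
  have h1 : ∀ i : Fin N → ZMod 2,
      (∏ p : Fin N, signChar (i p * j p)) * ∏ t : Fin N, signChar (i (b t) * j t)
        = ∏ p : Fin N, signChar (i p * c p) := by
    intro i
    have h2 : ∏ t : Fin N, signChar (i (b t) * j t)
        = ∏ p : Fin N, ∏ t ∈ Finset.univ.filter (fun t => b t = p),
            signChar (i (b t) * j t) :=
      (Finset.prod_fiberwise_of_maps_to (fun t _ => Finset.mem_univ (b t)) _).symm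
    rw [h2, ← Finset.prod_mul_distrib]
    refine Finset.prod_congr rfl fun p _ => ?_
    have h3 : ∏ t ∈ Finset.univ.filter (fun t => b t = p), signChar (i (b t) * j t)
        = ∏ t ∈ Finset.univ.filter (fun t => b t = p), signChar (i p * j t) := by
      refine Finset.prod_congr rfl fun t ht => ?_
      rw [(Finset.mem_filter.mp ht).2]
    rw [h3, prod_signChar, ← signChar_add, ← mul_add]
  rw [Finset.sum_congr rfl fun i _ => h1 i]
  have h4 : ∑ i : Fin N → ZMod 2, ∏ p : Fin N, signChar (i p * c p)
      = ∏ p : Fin N, ∑ a : ZMod 2, signChar (a * c p) := by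
    rw [Finset.prod_univ_sum]
    rw [← Fintype.piFinset_univ]
  rw [h4]
  have h5 : ∀ p : Fin N, (∑ a : ZMod 2, signChar (a * c p))
      = 2 * (if j p = ∑ x ∈ Finset.univ.filter (fun x => b x = p), j x then (1 : ℂ) else 0) := by
    intro p
    rw [sum_signChar]
    congr 1
    have key : ∀ u v : ZMod 2, (u + v = 0 ↔ u = v) := by decide
    have : c p = 0 ↔ j p = ∑ x ∈ Finset.univ.filter (fun x => b x = p), j x :=
      key (j p) _
    simp [this]
  rw [Finset.prod_congr rfl fun p _ => h5 p, Finset.prod_mul_distrib,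
    Finset.prod_const, Finset.card_univ, Fintype.card_fin, ← mul_assoc,
    inv_mul_cancel₀ (pow_ne_zero N two_ne_zero), one_mul]
end

section
/- Let N ≥ 1, let A be a subset of Fin N, and let b : Fin N → Fin N be a function satisfying b(x) = x for all x ∉ A. Then b is bijective if and only if for every p ∈ Fin N the cardinality of b^{-1}(p) ∩ A is congruent modulo 2 to 1 when p ∈ A and to 0 when p ∉ A. -/
/-- For `A ⊆ Fin N` and `b : Fin N → Fin N` fixing the complement of `A`
pointwise, `b` is bijective iff for every `p` the cardinality of `b⁻¹(p) ∩ A`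
is odd when `p ∈ A` and even when `p ∉ A`. -/
theorem bijective_iff_fiber_inter_parity (N : ℕ) (hN : 1 ≤ N) (A : Finset (Fin N))
    (b : Fin N → Fin N) (hb : ∀ x ∉ A, b x = x) :
    Function.Bijective b ↔
      ∀ p : Fin N,
        ((Finset.univ.filter (fun x => b x = p)) ∩ A).card % 2 =
          (if p ∈ A then 1 else 0) := by
  constructor
  · intro hbij p
    obtain ⟨x, hx⟩ := hbij.surjective p
    have hfib : Finset.univ.filter (fun y => b y = p) = {x} := by
      ext y
      simp only [Finset.mem_filter, Finset.mem_univ, true_and, Finset.mem_singleton]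
      constructor
      · intro h; exact hbij.injective (h.trans hx.symm)
      · rintro rfl; exact hx
    rw [hfib]
    by_cases hp : p ∈ A
    · have hxA : x ∈ A := by
        by_contra hxA
        rw [hb x hxA] at hx
        subst hx
        exact hxA hp
      rw [if_pos hp, Finset.singleton_inter_of_mem hxA]
      simp
    · have hxp : x = p := hbij.injective (hx.trans (hb p hp).symm)
      subst hxp
      rw [if_neg hp, Finset.singleton_inter_of_notMem hp]
      simp
  · intro h
    have hsurj : Function.Surjective b := by
      intro p
      by_cases hp : p ∈ A
      · have hcard := h p
        rw [if_pos hp] at hcard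
        have hne : ((Finset.univ.filter (fun x => b x = p)) ∩ A).Nonempty := by
          rw [← Finset.card_pos]
          omega
        obtain ⟨x, hx⟩ := hne
        simp only [Finset.mem_inter, Finset.mem_filter] at hx
        exact ⟨x, hx.1.2⟩
      · exact ⟨p, hb p hp⟩
    exact Finite.surjective_iff_bijective.mp hsurj
end

section
/- Let N ≥ 2, let τ ∈ Perm(Fin N × ZMod 2) be the flip τ(i, s) = (i, s + 1), and let H_N be the centralizer of τ in Perm(Fin N × ZMod 2). Then H_N acts transitively on Fin N × ZMod 2, and the diagonal action of H_N on pairs (functions Fin 2 → Fin N × ZMod 2) has exactly 3 orbits. -/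
def segmentFlip (N : ℕ) : Equiv.Perm (Fin N × ZMod 2) :=
  (Equiv.refl (Fin N)).prodCongr (Equiv.addRight (1 : ZMod 2))

def hyperoctahedral (N : ℕ) : Subgroup (Equiv.Perm (Fin N × ZMod 2)) :=
  Subgroup.centralizer {segmentFlip N}

namespace HypAux

variable {N : ℕ}

lemma segmentFlip_apply (x : Fin N × ZMod 2) :
    segmentFlip N x = (x.1, x.2 + 1) := rfl

def hog (π : Equiv.Perm (Fin N)) (ε : Fin N → ZMod 2) : Equiv.Perm (Fin N × ZMod 2) :=
  Equiv.prodShear π (fun i => Equiv.addRight (ε i))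

@[simp] lemma hog_apply (π : Equiv.Perm (Fin N)) (ε : Fin N → ZMod 2) (x : Fin N × ZMod 2) :
    hog π ε x = (π x.1, x.2 + ε x.1) := rfl

lemma hog_mem (π : Equiv.Perm (Fin N)) (ε : Fin N → ZMod 2) :
    hog π ε ∈ hyperoctahedral N := by
  rw [hyperoctahedral, Subgroup.mem_centralizer_iff]
  rintro g rfl
  ext x <;> simp [Equiv.Perm.mul_apply, segmentFlip_apply, add_right_comm]

lemma commutes {σ : Equiv.Perm (Fin N × ZMod 2)} (hσ : σ ∈ hyperoctahedral N)
    (x : Fin N × ZMod 2) : σ (segmentFlip N x) = segmentFlip N (σ x) := by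
  have h := hσ (segmentFlip N) rfl
  have h2 := Equiv.ext_iff.mp h x
  simpa [Equiv.Perm.mul_apply] using h2.symm

lemma flip_ne (x : Fin N × ZMod 2) : segmentFlip N x ≠ x := fun h => by
  have h2 := congrArg Prod.snd h
  simp only [segmentFlip_apply] at h2
  rw [add_eq_left] at h2
  exact one_ne_zero h2

lemma exists_point (x y : Fin N × ZMod 2) : ∃ σ ∈ hyperoctahedral N, σ x = y := by
  refine ⟨hog (Equiv.swap x.1 y.1) (fun _ => y.2 - x.2), hog_mem _ _, ?_⟩
  simp [Prod.ext_iff]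

lemma exists_pair {x0 x1 y0 y1 : Fin N × ZMod 2} (hx : x0.1 ≠ x1.1) (hy : y0.1 ≠ y1.1) :
    ∃ σ ∈ hyperoctahedral N, σ x0 = y0 ∧ σ x1 = y1 := by
  set π1 := Equiv.swap x0.1 y0.1 with hπ1
  set π2 := Equiv.swap (π1 x1.1) y1.1 with hπ2
  refine ⟨hog (π1.trans π2) (fun k => if k = x0.1 then y0.2 - x0.2 else y1.2 - x1.2),
    hog_mem _ _, ?_, ?_⟩
  · have h1 : π1 x0.1 = y0.1 := Equiv.swap_apply_left _ _
    have h2 : π2 y0.1 = y0.1 := by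
      apply Equiv.swap_apply_of_ne_of_ne
      · intro h; exact hx (π1.injective (h1.trans h))
      · exact hy
    simp [Prod.ext_iff, h1, h2]
  · have h2 : π2 (π1 x1.1) = y1.1 := Equiv.swap_apply_left _ _
    simp [Prod.ext_iff, h2, hx.symm]

def inv3 (N : ℕ) (p : Fin 2 → Fin N × ZMod 2) : Fin 3 :=
  if p 1 = p 0 then 0 else if p 1 = segmentFlip N (p 0) then 1 else 2

lemma zmod2 : ∀ a b : ZMod 2, a = b ∨ a = b + 1 := by decide

lemma inv3_smul (σ : hyperoctahedral N) (p : Fin 2 → Fin N × ZMod 2) :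
    inv3 N (σ • p) = inv3 N p := by
  have hinj := (σ : Equiv.Perm (Fin N × ZMod 2)).injective
  unfold inv3
  simp only [Pi.smul_apply, Subgroup.smul_def, Equiv.Perm.smul_def]
  simp only [← commutes σ.2, hinj.eq_iff]

lemma first_ne {p : Fin 2 → Fin N × ZMod 2} (h1 : ¬ p 1 = p 0)
    (h2 : ¬ p 1 = segmentFlip N (p 0)) : (p 0).1 ≠ (p 1).1 := by
  intro h
  rcases zmod2 ((p 1).2) ((p 0).2) with h' | h'
  · exact h1 (Prod.ext h.symm h')
  · exact h2 (Prod.ext h.symm h')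

variable (hN : 2 ≤ N)

def pa : Fin N × ZMod 2 := (⟨0, by omega⟩, 0)
def pb : Fin N × ZMod 2 := (⟨1, by omega⟩, 0)

def canon (j : Fin 3) : Fin 2 → Fin N × ZMod 2 :=
  fun k => if k = 0 then pa hN else
    if j = 0 then pa hN else if j = 1 then segmentFlip N (pa hN) else pb hN

lemma pa_ne_pb : (pa hN).1 ≠ (pb hN).1 := by
  simp [pa, pb, Fin.ext_iff]

lemma inv3_canon (j : Fin 3) : inv3 N (canon hN j) = j := by
  fin_cases j <;>
    simp [inv3, canon, pa, pb, segmentFlip_apply, Prod.ext_iff, Fin.ext_iff]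

lemma reach (p : Fin 2 → Fin N × ZMod 2) :
    ∃ σ : hyperoctahedral N, σ • canon hN (inv3 N p) = p := by
  by_cases h1 : p 1 = p 0
  · obtain ⟨σ, hσ, hx⟩ := exists_point (pa hN) (p 0)
    refine ⟨⟨σ, hσ⟩, funext fun k => ?_⟩
    have hj : inv3 N p = 0 := by simp [inv3, h1]
    fin_cases k <;> simp [hj, canon, hx, Subgroup.smul_def, Equiv.Perm.smul_def, h1]
  · by_cases h2 : p 1 = segmentFlip N (p 0)
    · obtain ⟨σ, hσ, hx⟩ := exists_point (pa hN) (p 0)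
      refine ⟨⟨σ, hσ⟩, funext fun k => ?_⟩
      have hj : inv3 N p = 1 := by simp [inv3, h1, h2, flip_ne]
      have hc := commutes hσ (pa hN)
      fin_cases k <;>
        simp [hj, canon, hx, hc, Subgroup.smul_def, Equiv.Perm.smul_def, h1, h2, flip_ne]
    · obtain ⟨σ, hσ, hx, hy⟩ := exists_pair (pa_ne_pb hN) (first_ne h1 h2)
      refine ⟨⟨σ, hσ⟩, funext fun k => ?_⟩
      have hj : inv3 N p = 2 := by simp [inv3, h1, h2]
      fin_cases k <;>
        simp [hj, canon, hx, hy, h1, h2, Subgroup.smul_def, Equiv.Perm.smul_def]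

end HypAux

open HypAux in
/-- For `N ≥ 2`, the hyperoctahedral group `H_N ⊆ S_{2N}` acts transitively on the `2N`
points, and its diagonal action on pairs has exactly `3` orbits. -/
theorem hyperoctahedral_orbits_pairs (N : ℕ) (hN : 2 ≤ N) :
    (∀ x y : Fin N × ZMod 2,
      ∃ σ ∈ hyperoctahedral N, σ x = y) ∧
    Nat.card (MulAction.orbitRel.Quotient (hyperoctahedral N)
      (Fin 2 → Fin N × ZMod 2)) = 3 := by
  refine ⟨exists_point, ?_⟩
  have hlift : ∀ (p q : Fin 2 → Fin N × ZMod 2),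
      (MulAction.orbitRel (hyperoctahedral N) (Fin 2 → Fin N × ZMod 2)).r p q →
        inv3 N p = inv3 N q := by
    intro p q h
    rw [MulAction.orbitRel_apply, MulAction.mem_orbit_iff] at h
    obtain ⟨σ, rfl⟩ := h
    exact inv3_smul σ q
  let f : MulAction.orbitRel.Quotient (hyperoctahedral N) (Fin 2 → Fin N × ZMod 2) → Fin 3 :=
    Quotient.lift (inv3 N) hlift
  have hbij : Function.Bijective f := by
    constructor
    · intro a b
      induction a using Quotient.inductionOn with | _ p =>
      induction b using Quotient.inductionOn with | _ q =>
      intro h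
      simp only [f, Quotient.lift_mk] at h
      obtain ⟨σ, hσ⟩ := reach hN p
      obtain ⟨σ', hσ'⟩ := reach hN q
      apply Quotient.sound
      show (MulAction.orbitRel (hyperoctahedral N) (Fin 2 → Fin N × ZMod 2)) p q
      rw [MulAction.orbitRel_apply, MulAction.mem_orbit_iff]
      refine ⟨σ * σ'⁻¹, ?_⟩
      rw [mul_smul, ← hσ', inv_smul_smul, ← h, hσ]
    · intro j
      exact ⟨Quotient.mk _ (canon hN j), inv3_canon hN j⟩
  rw [Nat.card_eq_of_bijective f hbij]
  simp
end

section
/- Let N ≥ 3, let τ ∈ Perm(Fin N × ZMod 2) be the flip τ(i, s) = (i, s + 1), and let H_N be the centralizer of τ in Perm(Fin N × ZMod 2). Then the diagonal action of H_N on 3-tuples (functions Fin 3 → Fin N × ZMod 2) has exactly 11 orbits. -/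
abbrev I3 : Type := (Bool × Bool) × (Bool × Bool) × (Bool × Bool)

def pr3 {N : ℕ} (x : Fin 3 → Fin N × ZMod 2) (a b : Fin 3) : Bool × Bool :=
  (decide ((x a).1 = (x b).1), decide (x a = x b))

def inv3 {N : ℕ} (x : Fin 3 → Fin N × ZMod 2) : I3 := (pr3 x 0 1, pr3 x 0 2, pr3 x 1 2)

/-- the wreath-product element `(i,s) ↦ (σ i, s + ε i)` -/
def wreath {N : ℕ} (σ : Equiv.Perm (Fin N)) (ε : Fin N → ZMod 2) :
    Equiv.Perm (Fin N × ZMod 2) where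
  toFun p := (σ p.1, p.2 + ε p.1)
  invFun p := (σ⁻¹ p.1, p.2 + ε (σ⁻¹ p.1))
  left_inv p := by
    have h2 : ∀ u : ZMod 2, u + u = 0 := by decide
    simp [add_assoc, h2]
  right_inv p := by
    have h2 : ∀ u : ZMod 2, u + u = 0 := by decide
    simp [add_assoc, h2]

lemma wreath_mem {N : ℕ} (σ : Equiv.Perm (Fin N)) (ε : Fin N → ZMod 2) :
    wreath σ ε ∈ hyperoctahedral N := by
  refine Subgroup.mem_centralizer_iff.mpr fun h hh => ?_
  rcases hh with rfl
  ext p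
  · simp [wreath, segmentFlip, Equiv.Perm.mul_apply]
  · simp only [Equiv.Perm.mul_apply, wreath, segmentFlip, Equiv.coe_fn_mk,
      Equiv.prodCongr_apply, Equiv.coe_refl, Prod.map_fst, Prod.map_snd, id_eq,
      Equiv.coe_addRight, Prod.map_apply]
    ring

lemma pair_iffs {N : ℕ} {x y : Fin 3 → Fin N × ZMod 2} (h : inv3 x = inv3 y) (a b : Fin 3) :
    (((x a).1 = (x b).1) ↔ ((y a).1 = (y b).1)) ∧ ((x a = x b) ↔ (y a = y b)) := by
  have h01 := congrArg (fun m : I3 => m.1) h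
  have h02 := congrArg (fun m : I3 => m.2.1) h
  have h12 := congrArg (fun m : I3 => m.2.2) h
  simp only [inv3, pr3, Prod.mk.injEq, decide_eq_decide] at h01 h02 h12
  fin_cases a <;> fin_cases b
  · exact ⟨iff_of_true rfl rfl, iff_of_true rfl rfl⟩
  · exact ⟨h01.1, h01.2⟩
  · exact ⟨h02.1, h02.2⟩
  · exact ⟨eq_comm.trans (h01.1.trans eq_comm), eq_comm.trans (h01.2.trans eq_comm)⟩
  · exact ⟨iff_of_true rfl rfl, iff_of_true rfl rfl⟩
  · exact ⟨h12.1, h12.2⟩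
  · exact ⟨eq_comm.trans (h02.1.trans eq_comm), eq_comm.trans (h02.2.trans eq_comm)⟩
  · exact ⟨eq_comm.trans (h12.1.trans eq_comm), eq_comm.trans (h12.2.trans eq_comm)⟩
  · exact ⟨iff_of_true rfl rfl, iff_of_true rfl rfl⟩

lemma exists_mem_apply_eq {N : ℕ} {x y : Fin 3 → Fin N × ZMod 2} (h : inv3 x = inv3 y) :
    ∃ g ∈ hyperoctahedral N, ∀ a, g (x a) = y a := by
  classical
  have hiff := pair_iffs h
  set p : Fin N → Prop := fun i => ∃ a, (x a).1 = i with hp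
  set q : Fin N → Prop := fun i => ∃ a, (y a).1 = i with hq
  let e : {i // p i} ≃ {i // q i} :=
    { toFun := fun w => ⟨(y w.2.choose).1, ⟨w.2.choose, rfl⟩⟩
      invFun := fun w => ⟨(x w.2.choose).1, ⟨w.2.choose, rfl⟩⟩
      left_inv := by
        rintro ⟨i, hi⟩
        apply Subtype.ext
        show (x (Exists.choose _)).1 = i
        set a := hi.choose with ha
        have hxa : (x a).1 = i := hi.choose_spec
        have hj : q (y a).1 := ⟨a, rfl⟩
        have hyb : (y hj.choose).1 = (y a).1 := hj.choose_spec
        have := (hiff hj.choose a).1.mpr hyb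
        rw [this, hxa]
      right_inv := by
        rintro ⟨j, hj⟩
        apply Subtype.ext
        show (y (Exists.choose _)).1 = j
        set a := hj.choose with ha
        have hya : (y a).1 = j := hj.choose_spec
        have hi : p (x a).1 := ⟨a, rfl⟩
        have hxb : (x hi.choose).1 = (x a).1 := hi.choose_spec
        have := (hiff hi.choose a).1.mp hxb
        rw [this, hya] }
  let σ := e.extendSubtype
  have hσ : ∀ a, σ ((x a).1) = (y a).1 := by
    intro a
    have hm : p ((x a).1) := ⟨a, rfl⟩
    rw [Equiv.extendSubtype_apply_of_mem e _ hm]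
    show (y (Exists.choose hm)).1 = (y a).1
    exact (hiff hm.choose a).1.mp hm.choose_spec
  -- second coordinates
  have hdiff : ∀ a b : Fin 3, (x a).1 = (x b).1 →
      (x a).2 + (x b).2 = (y a).2 + (y b).2 := by
    intro a b hs
    have hys : (y a).1 = (y b).1 := (hiff a b).1.mp hs
    have heq : ((x a).2 = (x b).2) ↔ ((y a).2 = (y b).2) := by
      constructor
      · intro h2
        have := (hiff a b).2.mp (Prod.ext hs h2)
        exact congrArg Prod.snd this
      · intro h2
        have := (hiff a b).2.mpr (Prod.ext hys h2)
        exact congrArg Prod.snd this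
    revert heq
    generalize (x a).2 = u; generalize (x b).2 = v
    generalize (y a).2 = u'; generalize (y b).2 = v'
    revert u v u' v'; decide
  let ε : Fin N → ZMod 2 := fun i =>
    if h : p i then (y h.choose).2 + (x h.choose).2 else 0
  refine ⟨wreath σ ε, wreath_mem σ ε, fun a => ?_⟩
  have hm : p ((x a).1) := ⟨a, rfl⟩
  have hε : ε ((x a).1) = (y hm.choose).2 + (x hm.choose).2 := by
    simp only [ε, dif_pos hm]
  show ((σ (x a).1), (x a).2 + ε ((x a).1)) = y a
  rw [hσ a, hε]
  refine Prod.ext rfl ?_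
  show (x a).2 + ((y hm.choose).2 + (x hm.choose).2) = (y a).2
  have hd := hdiff a hm.choose hm.choose_spec.symm
  revert hd
  generalize (x a).2 = u; generalize (x hm.choose).2 = v
  generalize (y a).2 = u'; generalize (y hm.choose).2 = v'
  revert u v u' v'; decide

def validList : List I3 :=
  [((false, false), (false, false), (false, false)),
   ((true, true), (false, false), (false, false)),
   ((true, false), (false, false), (false, false)),
   ((false, false), (true, true), (false, false)),
   ((false, false), (true, false), (false, false)),
   ((false, false), (false, false), (true, true)),
   ((false, false), (false, false), (true, false)),
   ((true, true), (true, true), (true, true)),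
   ((true, true), (true, false), (true, false)),
   ((true, false), (true, true), (true, false)),
   ((true, false), (true, false), (true, true))]

def Valid3 (m : I3) : Prop :=
  (m.1.2 → m.1.1) ∧ (m.2.1.2 → m.2.1.1) ∧ (m.2.2.2 → m.2.2.1) ∧
  (m.1.1 → m.2.1.1 → m.2.2.1) ∧ (m.1.1 → m.2.2.1 → m.2.1.1) ∧ (m.2.1.1 → m.2.2.1 → m.1.1) ∧
  (m.1.2 → m.2.1.2 → m.2.2.2) ∧ (m.1.2 → m.2.2.2 → m.2.1.2) ∧ (m.2.1.2 → m.2.2.2 → m.1.2) ∧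
  (m.1.1 → m.2.1.1 → (m.1.2 ∨ m.2.1.2 ∨ m.2.2.2))

instance : DecidablePred Valid3 := fun m => by unfold Valid3; infer_instance

lemma card_valid3 : Fintype.card {m : I3 // Valid3 m} = 11 := by decide

lemma mem_validList_of_valid : ∀ m : I3, Valid3 m → m ∈ validList := by decide

lemma valid_inv3 {N : ℕ} (x : Fin 3 → Fin N × ZMod 2) : Valid3 (inv3 x) := by
  have pig : ∀ u v w : ZMod 2, u = v ∨ u = w ∨ v = w := by decide
  simp only [Valid3, inv3, pr3, decide_eq_true_eq]
  refine ⟨fun h => congrArg Prod.fst h, fun h => congrArg Prod.fst h,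
    fun h => congrArg Prod.fst h,
    fun h1 h2 => h1.symm.trans h2, fun h1 h2 => h1.trans h2, fun h1 h2 => h1.trans h2.symm,
    fun h1 h2 => h1.symm.trans h2, fun h1 h2 => h1.trans h2, fun h1 h2 => h1.trans h2.symm,
    fun h1 h2 => ?_⟩
  rcases pig (x 0).2 (x 1).2 (x 2).2 with h | h | h
  · exact Or.inl (Prod.ext h1 h)
  · exact Or.inr (Or.inl (Prod.ext h2 h))
  · exact Or.inr (Or.inr (Prod.ext (h1.symm.trans h2) h))

lemma seg_eq_of_mem {N : ℕ} {g : Equiv.Perm (Fin N × ZMod 2)} (hg : g ∈ hyperoctahedral N)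
    {p q : Fin N × ZMod 2} (h : p.1 = q.1) : (g p).1 = (g q).1 := by
  have hc := (Subgroup.mem_centralizer_iff.mp hg) (segmentFlip N) rfl
  have key : ∀ i s, (g (i, s)).1 = (g (i, s + 1)).1 := by
    intro i s
    have := congrArg (fun e => (e (i, s)).1) hc
    simpa [segmentFlip, Equiv.Perm.mul_apply] using this
  have : q = p ∨ q = (p.1, p.2 + 1) := by
    rcases (by decide : ∀ u v : ZMod 2, v = u ∨ v = u + 1) p.2 q.2 with h2 | h2
    · exact Or.inl (Prod.ext h.symm h2)
    · exact Or.inr (Prod.ext h.symm h2)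
  rcases this with rfl | rfl
  · rfl
  · exact key p.1 p.2

lemma seg_iff_of_mem {N : ℕ} {g : Equiv.Perm (Fin N × ZMod 2)} (hg : g ∈ hyperoctahedral N)
    (p q : Fin N × ZMod 2) : (g p).1 = (g q).1 ↔ p.1 = q.1 := by
  refine ⟨fun h => ?_, seg_eq_of_mem hg⟩
  have := seg_eq_of_mem (inv_mem hg) (p := g p) (q := g q) h
  simpa using this

lemma inv3_smul {N : ℕ} (g : hyperoctahedral N) (x : Fin 3 → Fin N × ZMod 2) :
    inv3 (g • x) = inv3 x := by
  have hx : ∀ a : Fin 3, (g • x) a = g.1 (x a) := fun a => rfl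
  simp only [inv3, pr3, hx]
  have h1 : ∀ a b : Fin 3, decide ((g.1 (x a)).1 = (g.1 (x b)).1) = decide ((x a).1 = (x b).1) :=
    fun a b => decide_eq_decide.mpr (seg_iff_of_mem g.2 _ _)
  have h2 : ∀ a b : Fin 3, decide (g.1 (x a) = g.1 (x b)) = decide (x a = x b) :=
    fun a b => decide_eq_decide.mpr (EmbeddingLike.apply_eq_iff_eq g.1)
  rw [h1, h1, h1, h2, h2, h2]

lemma exists_inv3_eq {N : ℕ} (hN : 3 ≤ N) (m : I3) (hm : Valid3 m) :
    ∃ x : Fin 3 → Fin N × ZMod 2, inv3 x = m := by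
  have h0 : (0 : ℕ) < N := by omega
  have h1 : (1 : ℕ) < N := by omega
  have h2 : (2 : ℕ) < N := by omega
  have hmem := mem_validList_of_valid m hm
  simp only [validList, List.mem_cons, List.not_mem_nil, or_false] at hmem
  rcases hmem with rfl | rfl | rfl | rfl | rfl | rfl | rfl | rfl | rfl | rfl | rfl
  · exact ⟨![(⟨0, h0⟩, 0), (⟨1, h1⟩, 0), (⟨2, h2⟩, 0)], by
      simp [inv3, pr3, Prod.ext_iff, Fin.ext_iff]⟩
  · exact ⟨![(⟨0, h0⟩, 0), (⟨0, h0⟩, 0), (⟨1, h1⟩, 0)], by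
      simp [inv3, pr3, Prod.ext_iff, Fin.ext_iff]⟩
  · exact ⟨![(⟨0, h0⟩, 0), (⟨0, h0⟩, 1), (⟨1, h1⟩, 0)], by
      simp [inv3, pr3, Prod.ext_iff, Fin.ext_iff]⟩
  · exact ⟨![(⟨0, h0⟩, 0), (⟨1, h1⟩, 0), (⟨0, h0⟩, 0)], by
      simp [inv3, pr3, Prod.ext_iff, Fin.ext_iff]⟩
  · exact ⟨![(⟨0, h0⟩, 0), (⟨1, h1⟩, 0), (⟨0, h0⟩, 1)], by
      simp [inv3, pr3, Prod.ext_iff, Fin.ext_iff]⟩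
  · exact ⟨![(⟨0, h0⟩, 0), (⟨1, h1⟩, 0), (⟨1, h1⟩, 0)], by
      simp [inv3, pr3, Prod.ext_iff, Fin.ext_iff]⟩
  · exact ⟨![(⟨0, h0⟩, 0), (⟨1, h1⟩, 0), (⟨1, h1⟩, 1)], by
      simp [inv3, pr3, Prod.ext_iff, Fin.ext_iff]⟩
  · exact ⟨![(⟨0, h0⟩, 0), (⟨0, h0⟩, 0), (⟨0, h0⟩, 0)], by
      simp [inv3, pr3, Prod.ext_iff, Fin.ext_iff]⟩
  · exact ⟨![(⟨0, h0⟩, 0), (⟨0, h0⟩, 0), (⟨0, h0⟩, 1)], by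
      simp [inv3, pr3, Prod.ext_iff, Fin.ext_iff]⟩
  · exact ⟨![(⟨0, h0⟩, 0), (⟨0, h0⟩, 1), (⟨0, h0⟩, 0)], by
      simp [inv3, pr3, Prod.ext_iff, Fin.ext_iff]⟩
  · exact ⟨![(⟨0, h0⟩, 0), (⟨0, h0⟩, 1), (⟨0, h0⟩, 1)], by
      simp [inv3, pr3, Prod.ext_iff, Fin.ext_iff]⟩

/-- For `N ≥ 3`, the diagonal action of the hyperoctahedral group `H_N ⊆ S_{2N}` on
`3`-tuples has exactly `11` orbits. -/
theorem hyperoctahedral_orbits_triples (N : ℕ) (hN : 3 ≤ N) :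
    Nat.card (MulAction.orbitRel.Quotient (hyperoctahedral N)
      (Fin 3 → Fin N × ZMod 2)) = 11 := by
  have hsound : ∀ x y : Fin 3 → Fin N × ZMod 2,
      (MulAction.orbitRel (hyperoctahedral N) (Fin 3 → Fin N × ZMod 2)).r x y →
      (⟨inv3 x, valid_inv3 x⟩ : {m : I3 // Valid3 m}) = ⟨inv3 y, valid_inv3 y⟩ := by
    intro x y hxy
    obtain ⟨g, hg⟩ := hxy
    have h' : inv3 x = inv3 y := by rw [← hg]; exact inv3_smul g y
    exact Subtype.ext h'
  let f : MulAction.orbitRel.Quotient (hyperoctahedral N) (Fin 3 → Fin N × ZMod 2) →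
      {m : I3 // Valid3 m} :=
    Quotient.lift (fun x => (⟨inv3 x, valid_inv3 x⟩ : {m : I3 // Valid3 m})) hsound
  have hinj : Function.Injective f := by
    intro u v
    induction u using Quotient.ind
    induction v using Quotient.ind
    rename_i x y
    intro huv
    have hxy : inv3 x = inv3 y := congrArg Subtype.val huv
    obtain ⟨g, hg, hga⟩ := exists_mem_apply_eq hxy
    refine (Quotient.sound ?_).symm
    exact ⟨⟨g, hg⟩, funext fun a => hga a⟩
  have hsurj : Function.Surjective f := by
    rintro ⟨m, hm⟩
    obtain ⟨x, hx⟩ := exists_inv3_eq hN m hm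
    exact ⟨Quotient.mk _ x, Subtype.ext hx⟩
  rw [Nat.card_congr (Equiv.ofBijective f ⟨hinj, hsurj⟩), Nat.card_eq_fintype_card, card_valid3]
end

section
/- Let N ≥ 4, let τ ∈ Perm(Fin N × ZMod 2) be the flip τ(i, s) = (i, s + 1), and let H_N be the centralizer of τ in Perm(Fin N × ZMod 2). Then the diagonal action of H_N on 4-tuples (functions Fin 4 → Fin N × ZMod 2) has exactly 49 orbits. -/
namespace HyperoctAux

/-- The complete orbit invariant: which coordinates lie on the same segment,
and the sign difference when they do. -/
def Phi {M : ℕ} (f : Fin 4 → Fin M × ZMod 2) (a b : Fin 4) : Option (ZMod 2) :=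
  if (f a).1 = (f b).1 then some ((f a).2 - (f b).2) else none

def ent : Option (ZMod 2) → ℕ
  | none => 0
  | some s => if s = 0 then 1 else 2

def e2 {M : ℕ} (x y : Fin M × ZMod 2) : ℕ :=
  if x.1 = y.1 then (if x.2 - y.2 = 0 then 1 else 2) else 0

lemma e2_eq_ent {M : ℕ} (f : Fin 4 → Fin M × ZMod 2) (a b : Fin 4) :
    e2 (f a) (f b) = ent (Phi f a b) := by
  simp only [e2, Phi]; split_ifs <;> simp_all [ent]

/-- Numeric (base 3) encoding of the invariant. -/
def PhiN {M : ℕ} (f : Fin 4 → Fin M × ZMod 2) : ℕ :=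
  e2 (f 0) (f 0) + 3 * (e2 (f 0) (f 1) + 3 * (e2 (f 0) (f 2) + 3 * (e2 (f 0) (f 3) + 3 *
  (e2 (f 1) (f 0) + 3 * (e2 (f 1) (f 1) + 3 * (e2 (f 1) (f 2) + 3 * (e2 (f 1) (f 3) + 3 *
  (e2 (f 2) (f 0) + 3 * (e2 (f 2) (f 1) + 3 * (e2 (f 2) (f 2) + 3 * (e2 (f 2) (f 3) + 3 *
  (e2 (f 3) (f 0) + 3 * (e2 (f 3) (f 1) + 3 * (e2 (f 3) (f 2) + 3 * (e2 (f 3) (f 3))))))))))))))))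

def mk4 {α : Type*} (x0 x1 x2 x3 : α) : Fin 4 → α := fun a =>
  match a with
  | ⟨0, _⟩ => x0
  | ⟨1, _⟩ => x1
  | ⟨2, _⟩ => x2
  | ⟨3, _⟩ => x3

lemma mk4_eta {α : Type*} (f : Fin 4 → α) : mk4 (f 0) (f 1) (f 2) (f 3) = f := by
  funext a
  match a with
  | ⟨0, _⟩ => rfl
  | ⟨1, _⟩ => rfl
  | ⟨2, _⟩ => rfl
  | ⟨3, _⟩ => rfl

/-- The finite set of all invariant values. -/
def S : Finset ℕ :=
  Finset.univ.biUnion fun x0 : Fin 4 × ZMod 2 =>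
  Finset.univ.biUnion fun x1 : Fin 4 × ZMod 2 =>
  Finset.univ.biUnion fun x2 : Fin 4 × ZMod 2 =>
  Finset.univ.image fun x3 : Fin 4 × ZMod 2 => PhiN (mk4 x0 x1 x2 x3)

set_option maxHeartbeats 4000000 in
set_option maxRecDepth 100000 in
lemma S_card : S.card = 49 := by decide

lemma phiN_congr {M M' : ℕ} {f : Fin 4 → Fin M × ZMod 2} {g : Fin 4 → Fin M' × ZMod 2}
    (h : Phi f = Phi g) : PhiN f = PhiN g := by
  delta PhiN
  simp only [e2_eq_ent, h]

set_option maxHeartbeats 4000000 in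
lemma phiN_inj {M M' : ℕ} {f : Fin 4 → Fin M × ZMod 2} {g : Fin 4 → Fin M' × ZMod 2}
    (h : PhiN f = PhiN g) : Phi f = Phi g := by
  have entInj : ∀ u v : Option (ZMod 2), ent u = ent v → u = v := by decide
  have B : ∀ o : Option (ZMod 2), ent o ≤ 2 := by decide
  delta PhiN at h
  simp only [e2_eq_ent] at h
  have fin4cases : ∀ {P : Fin 4 → Prop}, P 0 → P 1 → P 2 → P 3 → ∀ a, P a := by
    intro P h0 h1 h2 h3 a
    match a with
    | ⟨0, _⟩ => exact h0
    | ⟨1, _⟩ => exact h1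
    | ⟨2, _⟩ => exact h2
    | ⟨3, _⟩ => exact h3
  have key : ∀ a b : Fin 4, ent (Phi f a b) = ent (Phi g a b) := by
    have b1 := B (Phi f 0 0); have b2 := B (Phi f 0 1); have b3 := B (Phi f 0 2)
    have b4 := B (Phi f 0 3); have b5 := B (Phi f 1 0); have b6 := B (Phi f 1 1)
    have b7 := B (Phi f 1 2); have b8 := B (Phi f 1 3); have b9 := B (Phi f 2 0)
    have b10 := B (Phi f 2 1); have b11 := B (Phi f 2 2); have b12 := B (Phi f 2 3)
    have b13 := B (Phi f 3 0); have b14 := B (Phi f 3 1); have b15 := B (Phi f 3 2)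
    have b16 := B (Phi f 3 3)
    have c1 := B (Phi g 0 0); have c2 := B (Phi g 0 1); have c3 := B (Phi g 0 2)
    have c4 := B (Phi g 0 3); have c5 := B (Phi g 1 0); have c6 := B (Phi g 1 1)
    have c7 := B (Phi g 1 2); have c8 := B (Phi g 1 3); have c9 := B (Phi g 2 0)
    have c10 := B (Phi g 2 1); have c11 := B (Phi g 2 2); have c12 := B (Phi g 2 3)
    have c13 := B (Phi g 3 0); have c14 := B (Phi g 3 1); have c15 := B (Phi g 3 2)
    have c16 := B (Phi g 3 3)
    have digit : ∀ x y r t : ℕ, x ≤ 2 → y ≤ 2 → x + 3 * r = y + 3 * t → x = y ∧ r = t := by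
      intro x y r t hx hy hxy; omega
    obtain ⟨k1, h⟩ := digit _ _ _ _ (B _) (B _) h
    obtain ⟨k2, h⟩ := digit _ _ _ _ (B _) (B _) h
    obtain ⟨k3, h⟩ := digit _ _ _ _ (B _) (B _) h
    obtain ⟨k4, h⟩ := digit _ _ _ _ (B _) (B _) h
    obtain ⟨k5, h⟩ := digit _ _ _ _ (B _) (B _) h
    obtain ⟨k6, h⟩ := digit _ _ _ _ (B _) (B _) h
    obtain ⟨k7, h⟩ := digit _ _ _ _ (B _) (B _) h
    obtain ⟨k8, h⟩ := digit _ _ _ _ (B _) (B _) h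
    obtain ⟨k9, h⟩ := digit _ _ _ _ (B _) (B _) h
    obtain ⟨k10, h⟩ := digit _ _ _ _ (B _) (B _) h
    obtain ⟨k11, h⟩ := digit _ _ _ _ (B _) (B _) h
    obtain ⟨k12, h⟩ := digit _ _ _ _ (B _) (B _) h
    obtain ⟨k13, h⟩ := digit _ _ _ _ (B _) (B _) h
    obtain ⟨k14, h⟩ := digit _ _ _ _ (B _) (B _) h
    obtain ⟨k15, h⟩ := digit _ _ _ _ (B _) (B _) h
    refine fin4cases ?_ ?_ ?_ ?_ <;> refine fin4cases ?_ ?_ ?_ ?_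
    exacts [k1, k2, k3, k4, k5, k6, k7, k8, k9, k10, k11, k12, k13, k14, k15, h]
  funext a b
  exact entInj _ _ (key a b)

lemma segmentFlip_apply {N : ℕ} (x : Fin N × ZMod 2) :
    segmentFlip N x = (x.1, x.2 + 1) := rfl

lemma sigma_apply {N : ℕ} {σ : Equiv.Perm (Fin N × ZMod 2)} (hσ : σ ∈ hyperoctahedral N)
    (i : Fin N) (s : ZMod 2) : σ (i, s) = ((σ (i, 0)).1, (σ (i, 0)).2 + s) := by
  have hc : segmentFlip N * σ = σ * segmentFlip N :=
    Subgroup.mem_centralizer_iff.1 hσ (segmentFlip N) rfl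
  have key : ∀ x, segmentFlip N (σ x) = σ (segmentFlip N x) := by
    intro x
    calc segmentFlip N (σ x) = (segmentFlip N * σ) x := rfl
    _ = (σ * segmentFlip N) x := by rw [hc]
    _ = σ (segmentFlip N x) := rfl
  have hs : ∀ s : ZMod 2, s = 0 ∨ s = 1 := by decide
  rcases hs s with rfl | rfl
  · simp
  · have h0 := key (i, 0)
    rw [segmentFlip_apply, segmentFlip_apply] at h0
    simp only [zero_add] at h0
    rw [← h0]

/-- Invariance of `Phi` under the diagonal hyperoctahedral action. -/
lemma phi_smul {N : ℕ} (σ : hyperoctahedral N) (f : Fin 4 → Fin N × ZMod 2) :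
    Phi (σ • f) = Phi f := by
  set τ : Equiv.Perm (Fin N × ZMod 2) := σ.1 with hτ
  have hval : ∀ x : Fin N × ZMod 2, τ x = ((τ (x.1, 0)).1, (τ (x.1, 0)).2 + x.2) := by
    intro x
    have := sigma_apply σ.2 x.1 x.2
    simpa using this
  have hinj : ∀ i j : Fin N, (τ (i, 0)).1 = (τ (j, 0)).1 → i = j := by
    intro i j h
    have : τ (j, (τ (i, 0)).2 - (τ (j, 0)).2) = τ (i, 0) := by
      rw [sigma_apply σ.2 j]
      rw [Prod.ext_iff]
      constructor
      · exact h.symm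
      · simp only; ring
    have h2 := τ.injective this
    exact (congrArg Prod.fst h2).symm
  have happ : ∀ a, (σ • f) a = τ (f a) := fun a => rfl
  funext a b
  unfold Phi
  rw [happ a, happ b, hval (f a), hval (f b)]
  dsimp only
  by_cases h : (f a).1 = (f b).1
  · rw [if_pos h, if_pos (by rw [h])]
    rw [h]; congr 1; ring
  · rw [if_neg h, if_neg (fun hh => h (hinj _ _ hh))]

/-- Completeness of the invariant: equal `Phi` implies same orbit. -/
lemma phi_complete {N : ℕ} (f g : Fin 4 → Fin N × ZMod 2) (h : Phi f = Phi g) :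
    ∃ σ : hyperoctahedral N, σ • f = g := by
  classical
  have hent : ∀ a b, Phi f a b = Phi g a b := fun a b => by rw [h]
  have hseg : ∀ a b, ((f a).1 = (f b).1 ↔ (g a).1 = (g b).1) := by
    intro a b
    have hh := hent a b
    unfold Phi at hh
    constructor
    · intro h1
      by_contra h2
      rw [if_pos h1, if_neg h2] at hh
      exact Option.some_ne_none _ hh
    · intro h1
      by_contra h2
      rw [if_neg h2, if_pos h1] at hh
      exact Option.some_ne_none _ hh.symm
  have hsgn : ∀ a b, (f a).1 = (f b).1 → (f a).2 - (f b).2 = (g a).2 - (g b).2 := by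
    intro a b h1
    have hh := hent a b
    unfold Phi at hh
    rw [if_pos h1, if_pos ((hseg a b).1 h1)] at hh
    exact Option.some.inj hh
  -- the partial segment bijection
  let p : Fin N → Prop := fun i => ∃ a, (f a).1 = i
  let q : Fin N → Prop := fun i => ∃ a, (g a).1 = i
  let eqv : { i // p i } ≃ { i // q i } :=
  { toFun := fun x => ⟨(g x.2.choose).1, x.2.choose, rfl⟩
    invFun := fun y => ⟨(f y.2.choose).1, y.2.choose, rfl⟩
    left_inv := by
      rintro ⟨i, hi⟩
      apply Subtype.ext
      dsimp only
      have h1 : (g (⟨hi.choose, rfl⟩ : ∃ a, (g a).1 = (g hi.choose).1).choose).1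
          = (g hi.choose).1 := (⟨hi.choose, rfl⟩ : ∃ a, (g a).1 = (g hi.choose).1).choose_spec
      have h2 := (hseg _ _).2 h1
      rw [h2, hi.choose_spec]
    right_inv := by
      rintro ⟨i, hi⟩
      apply Subtype.ext
      dsimp only
      have h1 : (f (⟨hi.choose, rfl⟩ : ∃ a, (f a).1 = (f hi.choose).1).choose).1
          = (f hi.choose).1 := (⟨hi.choose, rfl⟩ : ∃ a, (f a).1 = (f hi.choose).1).choose_spec
      have h2 := (hseg _ _).1 h1
      rw [h2, hi.choose_spec] }
  let π : Equiv.Perm (Fin N) := eqv.extendSubtype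
  have hπ : ∀ a, π (f a).1 = (g a).1 := by
    intro a
    rw [Equiv.extendSubtype_apply_of_mem eqv _ ⟨a, rfl⟩]
    show (g (⟨a, rfl⟩ : ∃ b, (f b).1 = (f a).1).choose).1 = (g a).1
    exact (hseg _ _).1 (⟨a, rfl⟩ : ∃ b, (f b).1 = (f a).1).choose_spec
  -- the sign corrections
  let eps : Fin N → ZMod 2 := fun i =>
    if hi : p i then (g hi.choose).2 - (f hi.choose).2 else 0
  have heps : ∀ a, eps (f a).1 = (g a).2 - (f a).2 := by
    intro a
    have hpa : p (f a).1 := ⟨a, rfl⟩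
    show (if hi : p (f a).1 then (g hi.choose).2 - (f hi.choose).2 else 0) = _
    rw [dif_pos hpa]
    have h1 : (f hpa.choose).1 = (f a).1 := hpa.choose_spec
    have h2 := hsgn _ _ h1
    linear_combination -h2
  let σ0 : Equiv.Perm (Fin N × ZMod 2) :=
    Equiv.prodShear π (fun i => Equiv.addRight (eps i))
  have hσ0 : ∀ x : Fin N × ZMod 2, σ0 x = (π x.1, x.2 + eps x.1) := fun x => rfl
  have hmem : σ0 ∈ hyperoctahedral N := by
    rw [hyperoctahedral, Subgroup.mem_centralizer_iff]
    intro t ht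
    rw [Set.mem_singleton_iff] at ht
    subst ht
    refine Equiv.ext fun x => ?_
    show (π x.1, (x.2 + eps x.1) + 1) = (π x.1, (x.2 + 1) + eps x.1)
    exact Prod.ext rfl (by ring)
  refine ⟨⟨σ0, hmem⟩, ?_⟩
  funext a
  show σ0 (f a) = g a
  rw [hσ0, hπ a, heps a]
  exact Prod.ext rfl (by ring)

/-- Compression: every tuple has a `Phi`-equivalent tuple using at most 4 segments. -/
lemma exists_small {N : ℕ} (f : Fin 4 → Fin N × ZMod 2) :
    ∃ h : Fin 4 → Fin 4 × ZMod 2, Phi h = Phi f := by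
  classical
  have hne : ∀ a : Fin 4, (Finset.univ.filter fun b => (f b).1 = (f a).1).Nonempty :=
    fun a => ⟨a, by simp⟩
  let m : Fin 4 → Fin 4 := fun a => (Finset.univ.filter fun b => (f b).1 = (f a).1).min' (hne a)
  have hm1 : ∀ a, (f (m a)).1 = (f a).1 :=
    fun a => (Finset.mem_filter.1 (Finset.min'_mem _ (hne a))).2
  have hm2 : ∀ a b, (f a).1 = (f b).1 → m a = m b := by
    intro a b hab
    have hset : (Finset.univ.filter fun b' => (f b').1 = (f a).1)
        = (Finset.univ.filter fun b' => (f b').1 = (f b).1) := by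
      apply Finset.filter_congr
      intro c _
      rw [hab]
    show (Finset.univ.filter fun b' => (f b').1 = (f a).1).min' (hne a) = _
    congr 1
  have hm3 : ∀ a b, m a = m b → (f a).1 = (f b).1 := by
    intro a b hab
    rw [← hm1 a, ← hm1 b, hab]
  refine ⟨fun a => (m a, (f a).2), ?_⟩
  funext a b
  unfold Phi
  dsimp only
  by_cases hc : (f a).1 = (f b).1
  · rw [if_pos hc, if_pos (hm2 a b hc)]
  · rw [if_neg hc, if_neg (fun hh => hc (hm3 a b hh))]

/-- Uplift: embed a 4-segment tuple into `Fin N` without changing `Phi`. -/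
lemma phi_up {N : ℕ} (hN : 4 ≤ N) (h : Fin 4 → Fin 4 × ZMod 2) :
    Phi (fun a => (Fin.castLE hN (h a).1, (h a).2)) = Phi h := by
  funext a b
  unfold Phi
  dsimp only
  by_cases hc : (h a).1 = (h b).1
  · rw [if_pos hc, if_pos (by rw [hc])]
  · rw [if_neg hc, if_neg (fun hh => hc (Fin.castLE_injective hN hh))]


lemma memS {N : ℕ} (f : Fin 4 → Fin N × ZMod 2) : PhiN f ∈ S := by
  obtain ⟨h, hh⟩ := exists_small f
  have heq : PhiN f = PhiN (mk4 (h 0) (h 1) (h 2) (h 3)) := by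
    rw [mk4_eta]
    exact (phiN_congr hh).symm
  rw [heq]
  refine Finset.mem_biUnion.2 ⟨h 0, Finset.mem_univ _, ?_⟩
  refine Finset.mem_biUnion.2 ⟨h 1, Finset.mem_univ _, ?_⟩
  refine Finset.mem_biUnion.2 ⟨h 2, Finset.mem_univ _, ?_⟩
  exact Finset.mem_image.2 ⟨h 3, Finset.mem_univ _, rfl⟩

/-- The induced map from the orbit space to the set of invariant values. -/
def F (N : ℕ) : MulAction.orbitRel.Quotient (hyperoctahedral N) (Fin 4 → Fin N × ZMod 2) →
    {n // n ∈ S} :=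
  Quotient.lift (fun f => (⟨PhiN f, memS f⟩ : {n // n ∈ S})) (by
    intro f g hfg
    obtain ⟨σ, hσ⟩ := MulAction.mem_orbit_iff.1 (MulAction.orbitRel_apply.1 hfg)
    apply Subtype.ext
    show PhiN f = PhiN g
    rw [← hσ]
    exact phiN_congr (phi_smul σ g))

lemma F_mk {N : ℕ} (f : Fin 4 → Fin N × ZMod 2) :
    F N (Quotient.mk (MulAction.orbitRel (hyperoctahedral N) (Fin 4 → Fin N × ZMod 2)) f)
      = ⟨PhiN f, memS f⟩ := rfl

lemma F_bijective (N : ℕ) (hN : 4 ≤ N) : Function.Bijective (F N) := by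
  constructor
  · intro q1 q2
    refine Quotient.inductionOn₂ q1 q2 ?_
    intro f g hfg
    rw [F_mk, F_mk] at hfg
    have h1 : PhiN f = PhiN g := Subtype.mk_eq_mk.1 hfg
    have h2 := phiN_inj h1
    obtain ⟨σ, hσ⟩ := phi_complete g f h2.symm
    exact Quotient.sound (MulAction.orbitRel_apply.2 (MulAction.mem_orbit_iff.2 ⟨σ, hσ⟩))
  · rintro ⟨n, hn⟩
    simp only [S, Finset.mem_biUnion, Finset.mem_image, Finset.mem_univ, true_and] at hn
    obtain ⟨x0, x1, x2, x3, hx⟩ := hn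
    refine ⟨Quotient.mk _ (fun a => (Fin.castLE hN ((mk4 x0 x1 x2 x3) a).1,
      ((mk4 x0 x1 x2 x3) a).2)), ?_⟩
    rw [F_mk]
    apply Subtype.ext
    exact (phiN_congr (phi_up hN (mk4 x0 x1 x2 x3))).trans hx

end HyperoctAux

open HyperoctAux in
/-- For `N ≥ 4`, the diagonal action of the hyperoctahedral group `H_N ⊆ S_{2N}` on
`4`-tuples has exactly `49` orbits. -/
theorem hyperoctahedral_orbits_quadruples (N : ℕ) (hN : 4 ≤ N) :
    Nat.card (MulAction.orbitRel.Quotient (hyperoctahedral N)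
      (Fin 4 → Fin N × ZMod 2)) = 49 := by
  calc Nat.card (MulAction.orbitRel.Quotient (hyperoctahedral N) (Fin 4 → Fin N × ZMod 2))
      = Nat.card {n // n ∈ S} := Nat.card_congr (Equiv.ofBijective _ (F_bijective N hN))
    _ = S.card := by rw [Nat.card_eq_fintype_card, Fintype.card_coe]
    _ = 49 := S_card
end

section
/- Let N ≥ 4 and let H_N be the finite group of N×N signed permutation matrices. Then the moments of the trace over H_N are: Σ_{g ∈ H_N} tr(g) = 0, Σ_{g ∈ H_N} tr(g)^2 = |H_N|, Σ_{g ∈ H_N} tr(g)^3 = 0, and Σ_{g ∈ H_N} tr(g)^4 = 4 · |H_N|. -/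
def IsSignedPermMatrix {N : ℕ} (g : Matrix (Fin N) (Fin N) ℤ) : Prop :=
  (∀ i, ∃! j, g i j ≠ 0) ∧ (∀ j, ∃! i, g i j ≠ 0) ∧
    ∀ i j, g i j = 0 ∨ g i j = 1 ∨ g i j = -1

namespace HypAux

open Finset Function Equiv Nat

variable {N : ℕ}

/-- matrix from a signed permutation -/
def SPM (σ : Equiv.Perm (Fin N)) (ε : Fin N → ℤˣ) : Matrix (Fin N) (Fin N) ℤ :=
  Matrix.of fun i j => if σ i = j then (ε i : ℤ) else 0

lemma SPM_apply (σ : Equiv.Perm (Fin N)) (ε : Fin N → ℤˣ) (i j : Fin N) :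
    SPM σ ε i j = if σ i = j then (ε i : ℤ) else 0 := rfl

lemma SPM_isSigned (σ : Equiv.Perm (Fin N)) (ε : Fin N → ℤˣ) :
    IsSignedPermMatrix (SPM σ ε) := by
  refine ⟨fun i => ⟨σ i, ?_, ?_⟩, fun j => ⟨σ.symm j, ?_, ?_⟩, fun i j => ?_⟩
  · simp [SPM_apply, Units.ne_zero]
  · intro j hj
    by_contra h
    exact hj (by simp [SPM_apply, Ne.symm h])
  · simp [SPM_apply, Units.ne_zero]
  · intro i hi
    by_contra h
    have : σ i ≠ j := fun hc => h (by simpa using congrArg σ.symm hc)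
    exact hi (by simp [SPM_apply, this])
  · rcases Int.units_eq_one_or (ε i) with h | h <;>
      simp [SPM_apply, h] <;> tauto

lemma SPM_injective :
    Function.Injective (fun p : Equiv.Perm (Fin N) × (Fin N → ℤˣ) => SPM p.1 p.2) := by
  rintro ⟨σ, ε⟩ ⟨τ, δ⟩ h
  simp only at h
  have hστ : σ = τ := by
    apply Equiv.ext
    intro i
    have h1 : SPM σ ε i (σ i) = SPM τ δ i (σ i) := by rw [h]
    rw [SPM_apply, SPM_apply, if_pos rfl] at h1
    by_contra hne
    rw [if_neg (fun hc => hne hc.symm)] at h1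
    exact Units.ne_zero (ε i) h1
  subst hστ
  have hεδ : ε = δ := by
    ext i : 1
    have h1 : SPM σ ε i (σ i) = SPM σ δ i (σ i) := by rw [h]
    rw [SPM_apply, SPM_apply, if_pos rfl, if_pos rfl] at h1
    exact Units.ext h1
  rw [hεδ]

lemma range_SPM :
    {g : Matrix (Fin N) (Fin N) ℤ | IsSignedPermMatrix g} =
      Set.range (fun p : Equiv.Perm (Fin N) × (Fin N → ℤˣ) => SPM p.1 p.2) := by
  ext g
  constructor
  · rintro ⟨h1, h2, h3⟩
    -- construct σ and ε
    have hf : ∀ i, g i ((h1 i).choose) ≠ 0 := fun i => (h1 i).choose_spec.1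
    set f : Fin N → Fin N := fun i => (h1 i).choose with hfdef
    have hinj : Function.Injective f := by
      intro i₁ i₂ hi
      exact (h2 (f i₁)).unique (hf i₁) (by rw [hi]; exact hf i₂)
    have hbij : Function.Bijective f := Finite.injective_iff_bijective.mp hinj
    set σ : Equiv.Perm (Fin N) := Equiv.ofBijective f hbij with hσdef
    have hσ : ∀ i, σ i = f i := fun i => rfl
    set ε : Fin N → ℤˣ := fun i => if g i (f i) = 1 then 1 else -1 with hεdef
    have hε : ∀ i, (ε i : ℤ) = g i (f i) := by
      intro i
      rcases h3 i (f i) with h | h | h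
      · exact absurd h (hf i)
      · simp [hεdef, h]
      · have : g i (f i) ≠ 1 := by rw [h]; decide
        simp [hεdef, this, h]
    refine ⟨⟨σ, ε⟩, ?_⟩
    ext i j
    show SPM σ ε i j = g i j
    rw [SPM_apply]
    by_cases hij : σ i = j
    · rw [if_pos hij, hε i, ← hσ i, hij]
    · rw [if_neg hij]
      by_contra hne
      exact hij ((hσ i) ▸ ((h1 i).choose_spec.2 j (Ne.symm hne)).symm)
  · rintro ⟨⟨σ, ε⟩, rfl⟩
    exact SPM_isSigned σ ε

lemma trace_SPM (σ : Equiv.Perm (Fin N)) (ε : Fin N → ℤˣ) :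
    Matrix.trace (SPM σ ε) = ∑ i ∈ Finset.univ.filter (fun i => σ i = i), (ε i : ℤ) := by
  rw [Matrix.trace, Finset.sum_filter]
  congr 1



lemma sum_update_eq (a : Fin N) (s : Finset (Fin N)) (ha : a ∉ s) (ε : Fin N → ℤˣ) (u : ℤˣ) :
    ∑ i ∈ s, ((Function.update ε a u i : ℤˣ) : ℤ) = ∑ i ∈ s, (ε i : ℤ) :=
  Finset.sum_congr rfl fun i hi => by
    rw [Function.update_of_ne (by rintro rfl; exact ha hi)]

lemma keyflip (a : Fin N) (f : (Fin N → ℤˣ) → ℤ)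
    (hf : ∀ ε u, f (Function.update ε a u) = f ε) :
    ∑ ε : Fin N → ℤˣ, (ε a : ℤ) * f ε = 0 := by
  have hinvol : Function.Involutive
      (fun ε : Fin N → ℤˣ => Function.update ε a (-ε a)) := by
    intro ε
    simp only [Function.update_self, Function.update_idem, neg_neg, Function.update_eq_self]
  have h := Equiv.sum_comp (Function.Involutive.toPerm _ hinvol) (fun ε : Fin N → ℤˣ => (ε a : ℤ) * f ε)
  have h2 : ∀ ε : Fin N → ℤˣ,
      (((Function.Involutive.toPerm _ hinvol) ε) a : ℤ) * f ((Function.Involutive.toPerm _ hinvol) ε) = -((ε a : ℤ) * f ε) := by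
    intro ε
    have : (Function.Involutive.toPerm _ hinvol) ε = Function.update ε a (-ε a) := rfl
    rw [this, hf, Function.update_self, Units.val_neg, neg_mul]
  rw [Finset.sum_congr rfl (fun ε _ => h2 ε), Finset.sum_neg_distrib] at h
  linarith

lemma hc2 (ε : Fin N → ℤˣ) (a : Fin N) : ((ε a : ℤ)) ^ 2 = 1 := by
  rcases Int.units_eq_one_or (ε a) with h | h <;> rw [h] <;> norm_num

lemma sum_one : ∑ _ε : Fin N → ℤˣ, (1 : ℤ) = 2 ^ N := by
  rw [Finset.sum_const, Finset.card_univ]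
  simp [Fintype.card_fun]

lemma esum_one (s : Finset (Fin N)) :
    ∑ ε : Fin N → ℤˣ, (∑ i ∈ s, (ε i : ℤ)) = 0 := by
  classical
  induction s using Finset.induction_on with
  | empty => simp
  | @insert a s ha ih =>
    simp only [Finset.sum_insert ha, Finset.sum_add_distrib, ih, add_zero]
    simpa using keyflip a (fun _ => 1) (fun _ _ => rfl)

lemma esum_two (s : Finset (Fin N)) :
    ∑ ε : Fin N → ℤˣ, (∑ i ∈ s, (ε i : ℤ)) ^ 2 = 2 ^ N * s.card := by
  classical
  induction s using Finset.induction_on with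
  | empty => simp
  | @insert a s ha ih =>
    have key : ∀ ε : Fin N → ℤˣ,
        ((ε a : ℤ) + ∑ i ∈ s, (ε i : ℤ)) ^ 2 =
          1 + ((ε a : ℤ) * (2 * ∑ i ∈ s, (ε i : ℤ)) + (∑ i ∈ s, (ε i : ℤ)) ^ 2) := by
      intro ε
      have h := hc2 ε a
      linear_combination h
    simp only [Finset.sum_insert ha, key, Finset.sum_add_distrib, ih, sum_one]
    rw [keyflip a (fun ε => 2 * ∑ i ∈ s, (ε i : ℤ))
        (fun ε u => by simp only [sum_update_eq a s ha])]
    push_cast [Finset.card_insert_of_notMem ha]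
    ring

lemma esum_three (s : Finset (Fin N)) :
    ∑ ε : Fin N → ℤˣ, (∑ i ∈ s, (ε i : ℤ)) ^ 3 = 0 := by
  classical
  induction s using Finset.induction_on with
  | empty => simp
  | @insert a s ha ih =>
    have key : ∀ ε : Fin N → ℤˣ,
        ((ε a : ℤ) + ∑ i ∈ s, (ε i : ℤ)) ^ 3 =
          ((ε a : ℤ) * (1 + 3 * (∑ i ∈ s, (ε i : ℤ)) ^ 2) +
            (3 * (∑ i ∈ s, (ε i : ℤ)) + (∑ i ∈ s, (ε i : ℤ)) ^ 3)) := by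
      intro ε
      have h := hc2 ε a
      linear_combination ((ε a : ℤ) + 3 * ∑ i ∈ s, (ε i : ℤ)) * h
    simp only [Finset.sum_insert ha, key, Finset.sum_add_distrib, ih, add_zero]
    rw [keyflip a (fun ε => 1 + 3 * (∑ i ∈ s, (ε i : ℤ)) ^ 2)
        (fun ε u => by simp only [sum_update_eq a s ha])]
    rw [← Finset.mul_sum, esum_one, mul_zero, zero_add]

lemma esum_four (s : Finset (Fin N)) :
    ∑ ε : Fin N → ℤˣ, (∑ i ∈ s, (ε i : ℤ)) ^ 4 =
      2 ^ N * (3 * (s.card : ℤ) ^ 2 - 2 * s.card) := by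
  classical
  induction s using Finset.induction_on with
  | empty => simp
  | @insert a s ha ih =>
    have key : ∀ ε : Fin N → ℤˣ,
        ((ε a : ℤ) + ∑ i ∈ s, (ε i : ℤ)) ^ 4 =
          (ε a : ℤ) * (4 * ∑ i ∈ s, (ε i : ℤ) + 4 * (∑ i ∈ s, (ε i : ℤ)) ^ 3) +
            (1 + (6 * (∑ i ∈ s, (ε i : ℤ)) ^ 2 + (∑ i ∈ s, (ε i : ℤ)) ^ 4)) := by
      intro ε
      have h := hc2 ε a
      linear_combination ((ε a : ℤ) ^ 2 + 1 + 4 * (ε a : ℤ) * (∑ i ∈ s, (ε i : ℤ)) + 6 * (∑ i ∈ s, (ε i : ℤ)) ^ 2) * h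
    simp only [Finset.sum_insert ha, key, Finset.sum_add_distrib, ih, sum_one]
    rw [keyflip a (fun ε => 4 * ∑ i ∈ s, (ε i : ℤ) + 4 * (∑ i ∈ s, (ε i : ℤ)) ^ 3)
        (fun ε u => by simp only [sum_update_eq a s ha])]
    rw [← Finset.mul_sum, esum_two]
    push_cast [Finset.card_insert_of_notMem ha]
    ring



lemma card_fix_one (a : Fin N) :
    (Finset.univ.filter fun σ : Equiv.Perm (Fin N) => σ a = a).card = (N - 1) ! := by
  classical
  rw [← Fintype.card_subtype]
  have e : {σ : Equiv.Perm (Fin N) // σ a = a} ≃ Equiv.Perm {x : Fin N // x ≠ a} := by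
    refine (Equiv.subtypeEquivRight (q := fun σ : Equiv.Perm (Fin N) =>
      ∀ x, ¬(x ≠ a) → σ x = x) ?_).trans
      (Equiv.Perm.subtypeEquivSubtypePerm (fun x : Fin N => x ≠ a)).symm
    intro σ
    constructor
    · intro h x hx
      rw [not_not] at hx
      subst hx; exact h
    · intro h
      exact h a (by simp)
  rw [Fintype.card_congr e, Fintype.card_perm]
  congr 1
  rw [Fintype.card_subtype_compl, Fintype.card_subtype_eq, Fintype.card_fin]

lemma card_fix_two (a b : Fin N) (hab : a ≠ b) :
    (Finset.univ.filter fun σ : Equiv.Perm (Fin N) => σ a = a ∧ σ b = b).card = (N - 2) ! := by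
  classical
  rw [← Fintype.card_subtype]
  have e : {σ : Equiv.Perm (Fin N) // σ a = a ∧ σ b = b} ≃
      Equiv.Perm {x : Fin N // x ≠ a ∧ x ≠ b} := by
    refine (Equiv.subtypeEquivRight (q := fun σ : Equiv.Perm (Fin N) =>
      ∀ x, ¬(x ≠ a ∧ x ≠ b) → σ x = x) ?_).trans
      (Equiv.Perm.subtypeEquivSubtypePerm (fun x : Fin N => x ≠ a ∧ x ≠ b)).symm
    intro σ
    constructor
    · rintro ⟨h1, h2⟩ x hx
      by_cases hxa : x = a
      · subst hxa; exact h1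
      · have hxb : x = b := by tauto
        subst hxb; exact h2
    · intro h
      exact ⟨h a (by simp), h b (by simp)⟩
  rw [Fintype.card_congr e, Fintype.card_perm]
  congr 1
  rw [Fintype.card_subtype]
  have : (Finset.univ.filter fun x : Fin N => x ≠ a ∧ x ≠ b) =
      (Finset.univ.erase a).erase b := by
    ext x
    simp [and_comm]
  rw [this, Finset.card_erase_of_mem (by simp [Ne.symm hab]),
    Finset.card_erase_of_mem (by simp), Finset.card_univ, Fintype.card_fin, Nat.sub_sub,
    Nat.add_comm]

lemma sum_fix (hN : 1 ≤ N) :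
    ∑ σ : Equiv.Perm (Fin N), (Finset.univ.filter fun i => σ i = i).card = N ! := by
  classical
  have h : ∀ σ : Equiv.Perm (Fin N), (Finset.univ.filter fun i => σ i = i).card =
      ∑ i : Fin N, if σ i = i then 1 else 0 := by
    intro σ; rw [Finset.card_filter]
  simp only [h]
  rw [Finset.sum_comm]
  have h2 : ∀ i : Fin N, (∑ σ : Equiv.Perm (Fin N), if σ i = i then 1 else 0) = (N - 1) ! := by
    intro i
    rw [← Finset.card_filter]
    exact card_fix_one i
  simp only [h2, Finset.sum_const, Finset.card_univ, Fintype.card_fin, smul_eq_mul]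
  exact Nat.mul_factorial_pred (by omega)

lemma sum_fix_sq (hN : 2 ≤ N) :
    ∑ σ : Equiv.Perm (Fin N), ((Finset.univ.filter fun i => σ i = i).card) ^ 2 = 2 * N ! := by
  classical
  have h : ∀ σ : Equiv.Perm (Fin N), ((Finset.univ.filter fun i => σ i = i).card) ^ 2 =
      ∑ i : Fin N, ∑ j : Fin N, if σ i = i ∧ σ j = j then 1 else 0 := by
    intro σ
    rw [sq, Finset.card_filter, Finset.sum_mul_sum]
    refine Finset.sum_congr rfl fun i _ => Finset.sum_congr rfl fun j _ => ?_
    split_ifs <;> tauto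
  simp only [h]
  rw [Finset.sum_comm]
  have h2 : ∀ i : Fin N, (∑ σ : Equiv.Perm (Fin N), ∑ j : Fin N,
      if σ i = i ∧ σ j = j then 1 else 0) = 2 * (N - 1) ! := by
    intro i
    rw [Finset.sum_comm]
    have h3 : ∀ j : Fin N, (∑ σ : Equiv.Perm (Fin N), if σ i = i ∧ σ j = j then 1 else 0) =
        if j = i then (N - 1) ! else (N - 2) ! := by
      intro j
      rw [← Finset.card_filter]
      by_cases hji : j = i
      · subst hji
        rw [if_pos rfl, ← card_fix_one j]
        congr 1
        ext σ
        simp [and_self]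
      · rw [if_neg hji]
        exact card_fix_two i j (Ne.symm hji)
    simp only [h3]
    have hA : (∑ x : Fin N, if x = i then (N - 1) ! else (N - 2) !) =
        (N - 1) ! + (N - 1) * (N - 2) ! := by
      rw [← Finset.add_sum_erase _ _ (Finset.mem_univ i), if_pos rfl]
      congr 1
      rw [Finset.sum_congr rfl (fun x hx => if_neg (Finset.ne_of_mem_erase hx)),
        Finset.sum_const, smul_eq_mul, Finset.card_erase_of_mem (Finset.mem_univ i),
        Finset.card_univ, Fintype.card_fin]
    rw [hA]
    have h4 : (N - 1) * (N - 2) ! = (N - 1) ! := by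
      have := Nat.mul_factorial_pred (n := N - 1) (by omega)
      simpa [Nat.sub_sub] using this
    rw [h4]
    omega
  simp only [h2]
  rw [Finset.sum_const, Finset.card_univ, Fintype.card_fin, smul_eq_mul, ← Nat.mul_assoc,
    Nat.mul_comm N 2, Nat.mul_assoc, Nat.mul_factorial_pred (by omega)]



lemma card_H : Nat.card {g : Matrix (Fin N) (Fin N) ℤ // IsSignedPermMatrix g} =
    2 ^ N * N ! := by
  have e : {g : Matrix (Fin N) (Fin N) ℤ // IsSignedPermMatrix g} ≃
      (Equiv.Perm (Fin N) × (Fin N → ℤˣ)) :=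
    (Equiv.subtypeEquivRight (fun g => (Set.ext_iff.mp range_SPM g))).trans
      (Equiv.ofInjective _ SPM_injective).symm
  rw [Nat.card_congr e]
  rw [Nat.card_eq_fintype_card, Fintype.card_prod, Fintype.card_perm, Fintype.card_fun,
    Fintype.card_units_int, Fintype.card_fin]
  ring

end HypAux

/-- The first four moments of the trace (the character of the fundamental representation)
over the hyperoctahedral group `H_N` of signed permutation matrices are `0, |H_N|, 0, 4|H_N|`. -/
theorem hyperoctahedral_trace_moments (N : ℕ) (hN : 4 ≤ N) :
    (∑ᶠ g ∈ {g : Matrix (Fin N) (Fin N) ℤ | IsSignedPermMatrix g}, Matrix.trace g) = 0 ∧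
    (∑ᶠ g ∈ {g : Matrix (Fin N) (Fin N) ℤ | IsSignedPermMatrix g}, (Matrix.trace g) ^ 2) =
      (Nat.card {g : Matrix (Fin N) (Fin N) ℤ // IsSignedPermMatrix g} : ℤ) ∧
    (∑ᶠ g ∈ {g : Matrix (Fin N) (Fin N) ℤ | IsSignedPermMatrix g}, (Matrix.trace g) ^ 3) = 0 ∧
    (∑ᶠ g ∈ {g : Matrix (Fin N) (Fin N) ℤ | IsSignedPermMatrix g}, (Matrix.trace g) ^ 4) =
      4 * (Nat.card {g : Matrix (Fin N) (Fin N) ℤ // IsSignedPermMatrix g} : ℤ) := by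
  classical
  open HypAux in
  have hcard : (Nat.card {g : Matrix (Fin N) (Fin N) ℤ // IsSignedPermMatrix g} : ℤ) =
      2 ^ N * ((Nat.factorial N) : ℤ) := by
    rw [HypAux.card_H]; push_cast; ring
  have hm1 : ∑ σ : Equiv.Perm (Fin N),
      ((Finset.univ.filter fun i => σ i = i).card : ℤ) = ((Nat.factorial N) : ℤ) := by
    rw [← Nat.cast_sum, HypAux.sum_fix (by omega)]
  have hm2 : ∑ σ : Equiv.Perm (Fin N),
      ((Finset.univ.filter fun i => σ i = i).card : ℤ) ^ 2 = 2 * ((Nat.factorial N) : ℤ) := by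
    have : ∀ σ : Equiv.Perm (Fin N),
        ((Finset.univ.filter fun i => σ i = i).card : ℤ) ^ 2 =
          ((((Finset.univ.filter fun i => σ i = i).card) ^ 2 : ℕ) : ℤ) := by
      intro σ; push_cast; ring
    simp only [this]
    rw [← Nat.cast_sum, HypAux.sum_fix_sq (by omega)]
    push_cast; ring
  have hconv : ∀ f : Matrix (Fin N) (Fin N) ℤ → ℤ,
      (∑ᶠ g ∈ {g : Matrix (Fin N) (Fin N) ℤ | IsSignedPermMatrix g}, f g) =
        ∑ σ : Equiv.Perm (Fin N), ∑ ε : Fin N → ℤˣ, f (HypAux.SPM σ ε) := by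
    intro f
    rw [HypAux.range_SPM, finsum_mem_range HypAux.SPM_injective,
      finsum_eq_sum_of_fintype, Fintype.sum_prod_type]
  refine ⟨?_, ?_, ?_, ?_⟩
  · rw [hconv]
    simp only [HypAux.trace_SPM, HypAux.esum_one, Finset.sum_const_zero]
  · rw [hconv (fun g => (Matrix.trace g) ^ 2), hcard]
    simp only [HypAux.trace_SPM, HypAux.esum_two]
    rw [← Finset.mul_sum, hm1]
  · rw [hconv (fun g => (Matrix.trace g) ^ 3)]
    simp only [HypAux.trace_SPM, HypAux.esum_three, Finset.sum_const_zero]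
  · rw [hconv (fun g => (Matrix.trace g) ^ 4), hcard]
    simp only [HypAux.trace_SPM, HypAux.esum_four]
    rw [← Finset.mul_sum, Finset.sum_sub_distrib, ← Finset.mul_sum, ← Finset.mul_sum,
      hm1, hm2]
    ring
end

section
/- Let N ≥ 4 and let H_N be the finite group of N×N signed permutation matrices. For g ∈ H_N let χ_p(g) = Σ_{i} g_{ii}^2 be the number of nonzero diagonal entries of g and χ_u(g) = tr(g). Then Σ_{g ∈ H_N} χ_p(g)^3 χ_u(g) = 0, Σ_{g ∈ H_N} χ_p(g) χ_u(g)^3 = 0, and Σ_{g ∈ H_N} χ_p(g)^2 χ_u(g)^2 = 5 · |H_N|. -/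
/-- The character `χ_p(g) = Σ_i g_{ii}²` of the magic representation of `H_N`. -/
def magicChar {N : ℕ} (g : Matrix (Fin N) (Fin N) ℤ) : ℤ := ∑ i : Fin N, (g i i) ^ 2

open Equiv Finset

namespace HyperOctAux

variable {N : ℕ}

/-- Signed permutation matrix from a permutation and signs. -/
noncomputable def toMat (σ : Equiv.Perm (Fin N)) (ε : Fin N → ℤˣ) :
    Matrix (Fin N) (Fin N) ℤ :=
  Matrix.of fun i j => if σ j = i then (ε j : ℤ) else 0

lemma toMat_apply (σ : Equiv.Perm (Fin N)) (ε : Fin N → ℤˣ) (i j : Fin N) :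
    toMat σ ε i j = if σ j = i then (ε j : ℤ) else 0 := rfl

lemma toMat_isSigned (σ : Equiv.Perm (Fin N)) (ε : Fin N → ℤˣ) :
    IsSignedPermMatrix (toMat σ ε) := by
  refine ⟨fun i => ⟨σ.symm i, ?_, ?_⟩, fun j => ⟨σ j, ?_, ?_⟩, fun i j => ?_⟩
  · simp [toMat_apply]
  · intro y hy
    rw [toMat_apply] at hy
    by_cases h : σ y = i
    · exact (Equiv.eq_symm_apply σ).mpr h
    · rw [if_neg h] at hy; exact absurd rfl hy
  · simp [toMat_apply]
  · intro y hy
    rw [toMat_apply] at hy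
    by_cases h : σ j = y
    · exact h.symm
    · rw [if_neg h] at hy; exact absurd rfl hy
  · rw [toMat_apply]
    rcases Int.units_eq_one_or (ε j) with h | h <;> split <;> simp [h]

lemma toMat_injective :
    Function.Injective (fun p : Equiv.Perm (Fin N) × (Fin N → ℤˣ) => toMat p.1 p.2) := by
  rintro ⟨σ, ε⟩ ⟨τ, δ⟩ h
  simp only at h
  have key : ∀ j, τ j = σ j ∧ δ j = ε j := by
    intro j
    have h1 : toMat σ ε (σ j) j = (ε j : ℤ) := by simp [toMat_apply]
    have h2 : toMat τ δ (σ j) j = if τ j = σ j then (δ j : ℤ) else 0 := rfl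
    rw [h] at h1
    rw [h2] at h1
    by_cases hc : τ j = σ j
    · rw [if_pos hc] at h1
      exact ⟨hc, Units.ext h1⟩
    · rw [if_neg hc] at h1
      exact absurd h1.symm (Units.ne_zero (ε j))
  have hσ : σ = τ := Equiv.ext fun j => ((key j).1).symm
  have hδ : ε = δ := funext fun j => ((key j).2).symm
  simp [hσ, hδ]

lemma range_toMat :
    Set.range (fun p : Equiv.Perm (Fin N) × (Fin N → ℤˣ) => toMat p.1 p.2)
      = {g : Matrix (Fin N) (Fin N) ℤ | IsSignedPermMatrix g} := by
  ext g
  constructor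
  · rintro ⟨⟨σ, ε⟩, rfl⟩
    exact toMat_isSigned σ ε
  · intro hg
    obtain ⟨hr, hc, hv⟩ := hg
    -- σfun j = the row index of the nonzero entry in column j
    have hex : ∀ j, ∃ i, g i j ≠ 0 := fun j => (hc j).exists
    classical
    set σfun : Fin N → Fin N := fun j => (hex j).choose with hσfun
    have hspec : ∀ j, g (σfun j) j ≠ 0 := fun j => (hex j).choose_spec
    have hinj : Function.Injective σfun := by
      intro j j' hjj
      obtain ⟨i0, hi0, hu⟩ := hr (σfun j)
      have e1 : j = i0 := hu j (hspec j)
      have e2 : j' = i0 := hu j' (by rw [hjj]; exact hspec j')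
      rw [e1, e2]
    have hbij : Function.Bijective σfun := Finite.injective_iff_bijective.mp hinj
    set σ : Equiv.Perm (Fin N) := Equiv.ofBijective σfun hbij with hσ
    have hval : ∀ j, g (σfun j) j = 1 ∨ g (σfun j) j = -1 := by
      intro j
      rcases hv (σfun j) j with h | h | h
      · exact absurd h (hspec j)
      · exact Or.inl h
      · exact Or.inr h
    set ε : Fin N → ℤˣ := fun j => if g (σfun j) j = 1 then 1 else -1 with hε
    have hεval : ∀ j, (ε j : ℤ) = g (σfun j) j := by
      intro j
      rcases hval j with h | h
      · simp [hε, h]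
      · rw [hε]; simp only [h]
        norm_num
    refine ⟨⟨σ, ε⟩, ?_⟩
    simp only
    funext i j
    rw [toMat_apply]
    have hσapp : σ j = σfun j := rfl
    by_cases hij : σ j = i
    · rw [if_pos hij, hεval, ← hσapp, hij]
    · rw [if_neg hij]
      by_contra hne
      obtain ⟨i0, hi0, hu⟩ := hc j
      have e1 : i = i0 := hu i (Ne.symm hne)
      have e2 : σfun j = i0 := hu _ (hspec j)
      exact hij (by rw [hσapp, e2, ← e1])

lemma magicChar_toMat (σ : Equiv.Perm (Fin N)) (ε : Fin N → ℤˣ) :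
    magicChar (toMat σ ε) = ((Finset.univ.filter fun i => σ i = i).card : ℤ) := by
  unfold magicChar
  rw [Finset.card_filter, Nat.cast_sum]
  refine Finset.sum_congr rfl fun i _ => ?_
  rw [toMat_apply]
  by_cases h : σ i = i
  · simp only [if_pos h]
    have : (ε i : ℤ) ^ 2 = ((ε i ^ 2 : ℤˣ) : ℤ) := by push_cast; ring
    rw [this, Int.units_sq]
    simp
  · simp [h]

lemma trace_toMat (σ : Equiv.Perm (Fin N)) (ε : Fin N → ℤˣ) :
    Matrix.trace (toMat σ ε) = ∑ i ∈ Finset.univ.filter (fun i => σ i = i), (ε i : ℤ) := by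
  rw [Matrix.trace, Finset.sum_filter]
  refine Finset.sum_congr rfl fun i _ => ?_
  rw [Matrix.diag_apply, toMat_apply]

/-- Sum over all sign vectors of an odd power of a partial sum of signs vanishes. -/
lemma sum_signs_odd_pow (F : Finset (Fin N)) {b : ℕ} (hb : Odd b) :
    ∑ ε : Fin N → ℤˣ, (∑ i ∈ F, (ε i : ℤ)) ^ b = 0 := by
  classical
  have hinv : Function.Involutive (fun ε : Fin N → ℤˣ => fun i => -(ε i)) := by
    intro ε; funext i; simp
  set e : Equiv.Perm (Fin N → ℤˣ) := hinv.toPerm _ with he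
  have hswap := Equiv.sum_comp e (fun ε : Fin N → ℤˣ => (∑ i ∈ F, (ε i : ℤ)) ^ b)
  have hneg : ∀ ε : Fin N → ℤˣ, (∑ i ∈ F, ((e ε) i : ℤ)) ^ b
      = -((∑ i ∈ F, (ε i : ℤ)) ^ b) := by
    intro ε
    have : (∑ i ∈ F, ((e ε) i : ℤ)) = -(∑ i ∈ F, (ε i : ℤ)) := by
      rw [← Finset.sum_neg_distrib]
      refine Finset.sum_congr rfl fun i _ => ?_
      simp [he, Function.Involutive.toPerm]
    rw [this, hb.neg_pow]
  rw [Finset.sum_congr rfl (fun ε _ => hneg ε), Finset.sum_neg_distrib] at hswap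
  linarith

/-- Sum over a single sign times another: orthogonality. -/
lemma sum_signs_mul (i j : Fin N) (hij : i ≠ j) :
    ∑ ε : Fin N → ℤˣ, (ε i : ℤ) * (ε j : ℤ) = 0 := by
  classical
  have hinv : Function.Involutive
      (fun ε : Fin N → ℤˣ => Function.update ε i (-(ε i))) := by
    intro ε
    simp [Function.update_idem]
  set e : Equiv.Perm (Fin N → ℤˣ) := hinv.toPerm _ with he
  have hswap := Equiv.sum_comp e (fun ε : Fin N → ℤˣ => (ε i : ℤ) * (ε j : ℤ))
  have hneg : ∀ ε : Fin N → ℤˣ, ((e ε) i : ℤ) * ((e ε) j : ℤ)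
      = -((ε i : ℤ) * (ε j : ℤ)) := by
    intro ε
    have h1 : (e ε) i = -(ε i) := by simp [he, Function.Involutive.toPerm]
    have h2 : (e ε) j = ε j := by
      simp [he, Function.Involutive.toPerm, Function.update_of_ne (Ne.symm hij)]
    rw [h1, h2]
    push_cast
    ring
  rw [Finset.sum_congr rfl (fun ε _ => hneg ε), Finset.sum_neg_distrib] at hswap
  linarith

/-- Rearranged sum over the inner sum. -/
lemma sum_comm_inner (F : Finset (Fin N)) :
    (∑ ε : Fin N → ℤˣ, ∑ i ∈ F, ∑ j ∈ F, (ε i : ℤ) * (ε j : ℤ))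
    = ∑ i ∈ F, ∑ j ∈ F, ∑ ε : Fin N → ℤˣ, (ε i : ℤ) * (ε j : ℤ) := by
  rw [Finset.sum_comm]
  exact Finset.sum_congr rfl fun i _ => Finset.sum_comm

lemma sum_signs_sq (F : Finset (Fin N)) :
    ∑ ε : Fin N → ℤˣ, (∑ i ∈ F, (ε i : ℤ)) ^ 2
      = (Fintype.card (Fin N → ℤˣ) : ℤ) * F.card := by
  classical
  have expand : ∀ ε : Fin N → ℤˣ, (∑ i ∈ F, (ε i : ℤ)) ^ 2
      = ∑ i ∈ F, ∑ j ∈ F, (ε i : ℤ) * (ε j : ℤ) := by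
    intro ε
    rw [sq, Finset.sum_mul_sum]
  rw [Finset.sum_congr rfl (fun ε _ => expand ε), sum_comm_inner]
  have inner : ∀ i ∈ F, (∑ j ∈ F, ∑ ε : Fin N → ℤˣ, (ε i : ℤ) * (ε j : ℤ))
      = (Fintype.card (Fin N → ℤˣ) : ℤ) := by
    intro i hi
    have : ∀ j ∈ F, (∑ ε : Fin N → ℤˣ, (ε i : ℤ) * (ε j : ℤ))
        = if i = j then (Fintype.card (Fin N → ℤˣ) : ℤ) else 0 := by
      intro j _
      by_cases h : i = j
      · subst h
        rw [if_pos rfl]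
        have : ∀ ε : Fin N → ℤˣ, (ε i : ℤ) * (ε i : ℤ) = 1 := by
          intro ε
          rw [← Units.val_mul, ← sq, Int.units_sq, Units.val_one]
        rw [Finset.sum_congr rfl (fun ε _ => this ε), Finset.sum_const, card_univ]
        simp
      · rw [if_neg h]
        exact sum_signs_mul i j h
    rw [Finset.sum_congr rfl this, Finset.sum_ite_eq F i fun _ =>
      (Fintype.card (Fin N → ℤˣ) : ℤ), if_pos hi]
  rw [Finset.sum_congr rfl inner, Finset.sum_const, nsmul_eq_mul, mul_comm]

/-- Number of permutations fixing every element of `s`. -/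
lemma card_perm_fixing (s : Finset (Fin N)) :
    Fintype.card {σ : Equiv.Perm (Fin N) // ∀ a ∈ s, σ a = a}
      = (N - s.card).factorial := by
  classical
  have e1 := Equiv.Perm.subtypeEquivSubtypePerm (fun a : Fin N => a ∉ s)
  have e2 : {σ : Equiv.Perm (Fin N) // ∀ a, ¬(a ∉ s) → σ a = a}
      ≃ {σ : Equiv.Perm (Fin N) // ∀ a ∈ s, σ a = a} :=
    Equiv.subtypeEquivRight (by
      intro σ
      constructor
      · intro h a ha; exact h a (not_not_intro ha)
      · intro h a ha; exact h a (not_not.mp ha))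
  have hcard := Fintype.card_congr (e1.trans e2)
  rw [← hcard, Fintype.card_perm]
  congr 1
  rw [Fintype.card_subtype_compl, Fintype.card_fin]
  congr 1
  exact Fintype.card_coe s

lemma fix_cube (σ : Equiv.Perm (Fin N)) :
    ((Finset.univ.filter fun i => σ i = i).card) ^ 3
      = ∑ t : Fin N × Fin N × Fin N,
          if σ t.1 = t.1 ∧ σ t.2.1 = t.2.1 ∧ σ t.2.2 = t.2.2 then 1 else 0 := by
  classical
  have hc : (Finset.univ.filter fun i => σ i = i).card
      = ∑ i : Fin N, if σ i = i then 1 else 0 := Finset.card_filter _ _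
  rw [hc]
  rw [Fintype.sum_prod_type]
  simp only [Fintype.sum_prod_type]
  have : (∑ i : Fin N, if σ i = i then 1 else 0) ^ 3
      = ∑ i : Fin N, ∑ j : Fin N, ∑ k : Fin N,
          ((if σ i = i then 1 else 0) * ((if σ j = j then 1 else 0) *
            (if σ k = k then 1 else 0))) := by
    rw [pow_succ, sq, Finset.sum_mul_sum, Finset.sum_mul]
    refine Finset.sum_congr rfl fun i _ => ?_
    rw [Finset.sum_mul]
    refine Finset.sum_congr rfl fun j _ => ?_
    rw [Finset.mul_sum]
    refine Finset.sum_congr rfl fun k _ => ?_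
    ring
  rw [this]
  refine Finset.sum_congr rfl fun i _ => Finset.sum_congr rfl fun j _ =>
    Finset.sum_congr rfl fun k _ => ?_
  by_cases h1 : σ i = i <;> by_cases h2 : σ j = j <;> by_cases h3 : σ k = k <;>
    simp [h1, h2, h3]

lemma count_fix_triple (i j k : Fin N) :
    (∑ σ : Equiv.Perm (Fin N), if σ i = i ∧ σ j = j ∧ σ k = k then 1 else 0)
      = (N - ({i, j, k} : Finset (Fin N)).card).factorial := by
  classical
  rw [← Finset.card_filter]
  rw [← card_perm_fixing ({i, j, k} : Finset (Fin N))]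
  rw [Fintype.card_subtype]
  congr 1
  ext σ
  simp only [Finset.mem_filter, Finset.mem_univ, true_and]
  constructor
  · intro h a ha
    simp only [Finset.mem_insert, Finset.mem_singleton] at ha
    rcases ha with rfl | rfl | rfl
    · exact h.1
    · exact h.2.1
    · exact h.2.2
  · intro h
    exact ⟨h i (by simp), h j (by simp), h k (by simp)⟩

lemma triple_insert_eq (i j k : Fin N) :
    ({i, j, k} : Finset (Fin N)) = insert k ({i, j} : Finset (Fin N)) := by
  ext x; simp only [Finset.mem_insert, Finset.mem_singleton]; tauto

lemma sum_fix_cubed (hN : 4 ≤ N) :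
    (∑ σ : Equiv.Perm (Fin N), ((Finset.univ.filter fun i => σ i = i).card) ^ 3)
      = 5 * N.factorial := by
  classical
  calc (∑ σ : Equiv.Perm (Fin N), ((Finset.univ.filter fun i => σ i = i).card) ^ 3)
      = ∑ σ : Equiv.Perm (Fin N), ∑ t : Fin N × Fin N × Fin N,
          if σ t.1 = t.1 ∧ σ t.2.1 = t.2.1 ∧ σ t.2.2 = t.2.2 then 1 else 0 :=
        Finset.sum_congr rfl fun σ _ => fix_cube σ
    _ = ∑ t : Fin N × Fin N × Fin N, ∑ σ : Equiv.Perm (Fin N),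
          if σ t.1 = t.1 ∧ σ t.2.1 = t.2.1 ∧ σ t.2.2 = t.2.2 then 1 else 0 :=
        Finset.sum_comm
    _ = ∑ t : Fin N × Fin N × Fin N,
          (N - ({t.1, t.2.1, t.2.2} : Finset (Fin N)).card).factorial :=
        Finset.sum_congr rfl fun t _ => count_fix_triple t.1 t.2.1 t.2.2
    _ = 5 * N.factorial := ?_
  obtain ⟨m, rfl⟩ : ∃ m, N = m + 4 := ⟨N - 4, by omega⟩
  simp only [Fintype.sum_prod_type]
  -- inner sum over k
  have hk : ∀ i j : Fin (m + 4),
      (∑ k : Fin (m + 4),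
        (m + 4 - ({i, j, k} : Finset (Fin (m + 4))).card).factorial)
      = ({i, j} : Finset (Fin (m + 4))).card
          * (m + 4 - ({i, j} : Finset (Fin (m + 4))).card).factorial
        + (m + 4 - ({i, j} : Finset (Fin (m + 4))).card)
          * (m + 4 - ({i, j} : Finset (Fin (m + 4))).card - 1).factorial := by
    intro i j
    set s2 : Finset (Fin (m + 4)) := {i, j} with hs2
    have hsplit := Finset.sum_sdiff (Finset.subset_univ s2)
      (f := fun k => (m + 4 - ({i, j, k} : Finset (Fin (m + 4))).card).factorial)
    rw [← hsplit]
    have hmem : ∀ k ∈ s2, (m + 4 - ({i, j, k} : Finset (Fin (m+4))).card).factorial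
        = (m + 4 - s2.card).factorial := by
      intro k hk
      rw [triple_insert_eq, Finset.insert_eq_self.mpr hk]
    have hnotmem : ∀ k ∈ Finset.univ \ s2,
        (m + 4 - ({i, j, k} : Finset (Fin (m+4))).card).factorial
        = (m + 4 - s2.card - 1).factorial := by
      intro k hk
      rw [Finset.mem_sdiff] at hk
      rw [triple_insert_eq, Finset.card_insert_of_notMem hk.2]
      congr 1
    rw [Finset.sum_congr rfl hmem, Finset.sum_congr rfl hnotmem,
      Finset.sum_const, Finset.sum_const, Finset.card_sdiff_of_subset (Finset.subset_univ s2),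
      Finset.card_univ, Fintype.card_fin, smul_eq_mul, smul_eq_mul]
    ring
  rw [Finset.sum_congr rfl (fun i _ => Finset.sum_congr rfl (fun j _ => hk i j))]
  -- now sum over j, splitting j = i and j ≠ i
  have hjsum : ∀ i : Fin (m + 4),
      (∑ j : Fin (m + 4),
        (({i, j} : Finset (Fin (m+4))).card
            * (m + 4 - ({i, j} : Finset (Fin (m+4))).card).factorial
          + (m + 4 - ({i, j} : Finset (Fin (m+4))).card)
            * (m + 4 - ({i, j} : Finset (Fin (m+4))).card - 1).factorial))
      = (1 * (m + 3).factorial + (m + 3) * (m + 2).factorial)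
        + (m + 3) * (2 * (m + 2).factorial + (m + 2) * (m + 1).factorial) := by
    intro i
    rw [← Finset.add_sum_erase _ _ (Finset.mem_univ i)]
    have hii : ({i, i} : Finset (Fin (m+4))).card = 1 := by
      simp
    have herase : ∀ j ∈ Finset.univ.erase i,
        (({i, j} : Finset (Fin (m+4))).card
            * (m + 4 - ({i, j} : Finset (Fin (m+4))).card).factorial
          + (m + 4 - ({i, j} : Finset (Fin (m+4))).card)
            * (m + 4 - ({i, j} : Finset (Fin (m+4))).card - 1).factorial)
        = 2 * (m + 2).factorial + (m + 2) * (m + 1).factorial := by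
      intro j hj
      rw [Finset.mem_erase] at hj
      have hcard : ({i, j} : Finset (Fin (m+4))).card = 2 := by
        rw [Finset.card_insert_of_notMem (by simp [hj.1.symm]), Finset.card_singleton]
      rw [hcard, show m + 4 - 2 = m + 2 from rfl, show m + 2 - 1 = m + 1 from rfl]
    rw [Finset.sum_congr rfl herase, Finset.sum_const, Finset.card_erase_of_mem
      (Finset.mem_univ i), Finset.card_univ, Fintype.card_fin, hii, smul_eq_mul,
      show m + 4 - 1 = m + 3 from rfl, show m + 3 - 1 = m + 2 from rfl]
  rw [Finset.sum_congr rfl (fun i _ => hjsum i), Finset.sum_const, Finset.card_univ,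
    Fintype.card_fin, smul_eq_mul]
  have h4 : (m + 4).factorial = (m + 4) * ((m + 3) * ((m + 2) * (m + 1).factorial)) := by
    rw [show m + 4 = (m + 3) + 1 from rfl, Nat.factorial_succ,
      show m + 3 = (m + 2) + 1 from rfl, Nat.factorial_succ,
      show m + 2 = (m + 1) + 1 from rfl, Nat.factorial_succ]
  have h3 : (m + 3).factorial = (m + 3) * ((m + 2) * (m + 1).factorial) := by
    rw [show m + 3 = (m + 2) + 1 from rfl, Nat.factorial_succ,
      show m + 2 = (m + 1) + 1 from rfl, Nat.factorial_succ]
  have h2 : (m + 2).factorial = (m + 2) * (m + 1).factorial := by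
    rw [show m + 2 = (m + 1) + 1 from rfl, Nat.factorial_succ]
  rw [h4, h3, h2]
  ring

end HyperOctAux

open HyperOctAux in
/-- Mixed moments of the magic character `χ_p` and the fundamental character `χ_u = tr`
over the hyperoctahedral group `H_N` of signed permutation matrices:
`Σ χ_p³χ_u = 0`, `Σ χ_p χ_u³ = 0`, and `Σ χ_p²χ_u² = 5|H_N|`. -/
theorem hyperoctahedral_mixed_char_moments (N : ℕ) (hN : 4 ≤ N) :
    (∑ᶠ g ∈ {g : Matrix (Fin N) (Fin N) ℤ | IsSignedPermMatrix g},
      (magicChar g) ^ 3 * Matrix.trace g) = 0 ∧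
    (∑ᶠ g ∈ {g : Matrix (Fin N) (Fin N) ℤ | IsSignedPermMatrix g},
      magicChar g * (Matrix.trace g) ^ 3) = 0 ∧
    (∑ᶠ g ∈ {g : Matrix (Fin N) (Fin N) ℤ | IsSignedPermMatrix g},
      (magicChar g) ^ 2 * (Matrix.trace g) ^ 2) =
      5 * (Nat.card {g : Matrix (Fin N) (Fin N) ℤ // IsSignedPermMatrix g} : ℤ) := by
  classical
  have key : ∀ F : Matrix (Fin N) (Fin N) ℤ → ℤ,
      (∑ᶠ g ∈ {g : Matrix (Fin N) (Fin N) ℤ | IsSignedPermMatrix g}, F g)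
      = ∑ σ : Equiv.Perm (Fin N), ∑ ε : Fin N → ℤˣ, F (toMat σ ε) := by
    intro F
    rw [← range_toMat, finsum_mem_range toMat_injective, finsum_eq_sum_of_fintype,
      Fintype.sum_prod_type]
  refine ⟨?_, ?_, ?_⟩
  · rw [key]
    refine Finset.sum_eq_zero fun σ _ => ?_
    simp only [magicChar_toMat, trace_toMat]
    rw [← Finset.mul_sum]
    have := sum_signs_odd_pow (N := N) (Finset.univ.filter fun i => σ i = i)
      (b := 1) ⟨0, by ring⟩
    simp only [pow_one] at this
    rw [this, mul_zero]
  · rw [key]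
    refine Finset.sum_eq_zero fun σ _ => ?_
    simp only [magicChar_toMat, trace_toMat]
    rw [← Finset.mul_sum]
    rw [sum_signs_odd_pow (N := N) (Finset.univ.filter fun i => σ i = i)
      (b := 3) ⟨1, by ring⟩, mul_zero]
  · rw [key]
    have hcard : (Nat.card {g : Matrix (Fin N) (Fin N) ℤ // IsSignedPermMatrix g})
        = N.factorial * Fintype.card (Fin N → ℤˣ) := by
      have e : (Equiv.Perm (Fin N) × (Fin N → ℤˣ))
          ≃ {g : Matrix (Fin N) (Fin N) ℤ // IsSignedPermMatrix g} :=
        (Equiv.ofInjective _ toMat_injective).trans (Equiv.setCongr range_toMat)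
      rw [← Nat.card_congr e, Nat.card_eq_fintype_card, Fintype.card_prod,
        Fintype.card_perm, Fintype.card_fin]
    rw [hcard]
    have hstep : ∀ σ : Equiv.Perm (Fin N),
        (∑ ε : Fin N → ℤˣ, magicChar (toMat σ ε) ^ 2 * Matrix.trace (toMat σ ε) ^ 2)
        = (Fintype.card (Fin N → ℤˣ) : ℤ)
            * ((Finset.univ.filter fun i => σ i = i).card : ℤ) ^ 3 := by
      intro σ
      simp only [magicChar_toMat, trace_toMat]
      rw [← Finset.mul_sum, sum_signs_sq]
      ring
    rw [Finset.sum_congr rfl fun σ _ => hstep σ, ← Finset.mul_sum]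
    have : (∑ σ : Equiv.Perm (Fin N),
        ((Finset.univ.filter fun i => σ i = i).card : ℤ) ^ 3)
        = ((5 * N.factorial : ℕ) : ℤ) := by
      rw [← sum_fix_cubed hN]
      push_cast
      rfl
    rw [this]
    push_cast
    ring
end

section
/- Let N ≥ 1, k ∈ ℕ, and let i, j : Fin k → Fin N be two tuples. Let c be the number of distinct values taken by i. Then the number of permutations σ ∈ Perm(Fin N) satisfying σ(j(t)) = i(t) for all t ∈ Fin k equals (N − c)! if the kernels of i and j coincide (i.e. for all s, t, i(s) = i(t) ⟺ j(s) = j(t)), and equals 0 otherwise. -/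
/-- The integration formula for `S_N`: given `k`-tuples `i, j : Fin k → Fin N`, the number
of permutations `σ` with `σ(j t) = i t` for all `t` equals `(N - c)!` if the kernels of
`i` and `j` coincide (where `c` is the number of distinct values of `i`), and `0` otherwise. -/
theorem card_perms_mapping_tuple (N k : ℕ) (hN : 1 ≤ N) (i j : Fin k → Fin N) :
    (Finset.univ.filter (fun σ : Equiv.Perm (Fin N) => ∀ t, σ (j t) = i t)).card =
      if ∀ s t : Fin k, i s = i t ↔ j s = j t then
        (N - (Finset.univ.image i).card).factorial
      else 0 := by
  split_ifs with hker
  · -- kernels coincide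
    set S : Finset (Fin N) := Finset.univ.image i with hS
    set T : Finset (Fin N) := Finset.univ.image j with hT
    -- bijection between image of j and image of i sending j t to i t
    have hf : ∀ a : Fin N, a ∈ T → ∃ t, j t = a := by
      intro a ha
      simpa using Finset.mem_image.mp ha
    classical
    let f : {a // a ∈ T} → {a // a ∈ S} := fun a =>
      ⟨i (hf a.1 a.2).choose, Finset.mem_image.mpr ⟨(hf a.1 a.2).choose, Finset.mem_univ _, rfl⟩⟩
    have hfspec : ∀ (t : Fin k), (f ⟨j t, Finset.mem_image.mpr ⟨t, Finset.mem_univ _, rfl⟩⟩ : Fin N) = i t := by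
      intro t
      have h := (hf (j t) (Finset.mem_image.mpr ⟨t, Finset.mem_univ _, rfl⟩)).choose_spec
      exact (hker _ _).mpr h
    have hfbij : Function.Bijective f := by
      constructor
      · rintro ⟨a, ha⟩ ⟨b, hb⟩ hab
        have h1 := (hf a ha).choose_spec
        have h2 := (hf b hb).choose_spec
        have : i (hf a ha).choose = i (hf b hb).choose := Subtype.ext_iff.mp hab
        have := (hker _ _).mp this
        exact Subtype.ext (h1.symm.trans (this.trans h2))
      · rintro ⟨b, hb⟩
        obtain ⟨t, _, ht⟩ := Finset.mem_image.mp hb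
        refine ⟨⟨j t, Finset.mem_image.mpr ⟨t, Finset.mem_univ _, rfl⟩⟩, ?_⟩
        exact Subtype.ext (by rw [hfspec t, ht])
    have hcard : T.card = S.card := by
      have := Fintype.card_congr (Equiv.ofBijective f hfbij)
      simpa using this
    -- equiv between complements
    have hcardc : Fintype.card {a : Fin N // a ∉ T} = Fintype.card {a : Fin N // a ∉ S} := by
      simp only [Fintype.card_subtype]
      rw [show (Finset.univ.filter (fun a => a ∉ T)) = Tᶜ from by ext; simp,
        show (Finset.univ.filter (fun a => a ∉ S)) = Sᶜ from by ext; simp,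
        Finset.card_compl, Finset.card_compl, hcard]
    let e : {a // a ∈ T} ≃ {a // a ∈ S} := Equiv.ofBijective f hfbij
    let en : {a : Fin N // ¬ a ∈ T} ≃ {a : Fin N // ¬ a ∈ S} := Fintype.equivOfCardEq hcardc
    let σ₀ : Equiv.Perm (Fin N) := Equiv.subtypeCongr e en
    have hσ₀ : ∀ t, σ₀ (j t) = i t := by
      intro t
      have hm : j t ∈ T := Finset.mem_image.mpr ⟨t, Finset.mem_univ _, rfl⟩
      have : σ₀ (j t) = (e ⟨j t, hm⟩ : Fin N) := by
        simp [σ₀, Equiv.subtypeCongr, hm]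
      rw [this]
      exact hfspec t
    -- bijection with permutations fixing S pointwise
    have key : (Finset.univ.filter (fun σ : Equiv.Perm (Fin N) => ∀ t, σ (j t) = i t)).card
        = Fintype.card (Equiv.Perm {a : Fin N // a ∉ S}) := by
      rw [← Fintype.card_subtype]
      refine Fintype.card_congr ?_
      refine Equiv.trans ?_ (Equiv.Perm.subtypeEquivSubtypePerm (fun a => a ∉ S)).symm
      refine { toFun := fun σ => ⟨σ.1 * σ₀⁻¹, ?_⟩,
               invFun := fun τ => ⟨τ.1 * σ₀, ?_⟩, left_inv := ?_, right_inv := ?_ }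
      · intro a ha
        rw [not_not] at ha
        obtain ⟨t, _, ht⟩ := Finset.mem_image.mp ha
        have h1 : σ₀⁻¹ a = j t := by
          rw [← ht, ← hσ₀ t, Equiv.Perm.inv_def, Equiv.symm_apply_apply]
        simp only [Equiv.Perm.mul_apply, h1]
        rw [σ.2 t, ht]
      · intro t
        have ha : i t ∈ S := Finset.mem_image.mpr ⟨t, Finset.mem_univ _, rfl⟩
        simp only [Equiv.Perm.mul_apply, hσ₀ t]
        exact τ.2 (i t) (by simpa using ha)
      · rintro ⟨σ, hσ⟩; ext a; simp
      · rintro ⟨τ, hτ⟩; ext a; simp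
    rw [key, Fintype.card_perm, Fintype.card_subtype]
    congr 2
    rw [show (Finset.univ.filter (fun a => a ∉ S)) = Sᶜ from by ext; simp,
      Finset.card_compl]
    simp [S]
  · -- kernels differ: no such permutation exists
    rw [Finset.card_eq_zero]
    rw [Finset.filter_eq_empty_iff]
    intro σ _ hσ
    apply hker
    intro s t
    rw [← hσ s, ← hσ t]
    exact ⟨fun h => σ.injective h, fun h => by rw [h]⟩
end
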